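/- arXiv:1507.01332 — 5 statements merged into one kernel-verified Lean document; each statement's English description precedes it below -/
import Mathlib

section
/- Let ξ be any switching signal and let (S, I) be a solution of the switched SIRS system. If S(0) ≥ 0, I(0) ≥ 0 and S(0) + I(0) ≤ N, then (S(t), I(t)) ∈ ∇ for all t ≥ 0; moreover, if in addition S(0) > 0 and I(0) > 0, then S(t) > 0 and I(t) > 0 for all t ≥ 0. -/
open Filter MeasureTheory

/-- The state space of environments: `true` is `+`, `false` is `−`. -/
abbrev Env := Bool

/-- `ξ` is locally constant (as a function on `[0,∞)`) at the point `t`. -/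
def ContPt (ξ : ℝ → Env) (t : ℝ) : Prop :=
  ∀ᶠ s in nhdsWithin t (Set.Ici (0:ℝ)), ξ s = ξ t

/-- A switching signal: right-continuous, piecewise constant,
with locally finite set of discontinuities in `[0,∞)`. -/
def IsSwitchingSignal (ξ : ℝ → Env) : Prop :=
  (∀ t : ℝ, 0 ≤ t → ∀ᶠ s in nhdsWithin t (Set.Ici t), ξ s = ξ t) ∧
  (∀ T : ℝ, {t : ℝ | 0 ≤ t ∧ t ≤ T ∧ ¬ ContPt ξ t}.Finite)

/-- `(S, I)` is a solution of the switched SIRS system driven by `ξ`: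
continuous on `[0,∞)` and satisfying the SIRS equations at every
`t ≥ 0` which is not a discontinuity of `ξ`. -/
def IsSIRSSolution (N : ℝ) (a b c : Env → ℝ) (ξ : ℝ → Env) (S I : ℝ → ℝ) : Prop :=
  ContinuousOn S (Set.Ici (0:ℝ)) ∧ ContinuousOn I (Set.Ici (0:ℝ)) ∧
  ∀ t : ℝ, 0 ≤ t → ContPt ξ t →
    HasDerivWithinAt S (-(a (ξ t) * S t * I t) + c (ξ t) * (N - S t - I t)) (Set.Ici (0:ℝ)) t ∧
    HasDerivWithinAt I (a (ξ t) * S t * I t - b (ξ t) * I t) (Set.Ici (0:ℝ)) t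

/-- `ξ` has mean growth rate `lam`:
`lim_{t→∞} (1/t) ∫₀ᵗ (a(ξ(s))·N − b(ξ(s))) ds = lam`. -/
def HasMeanGrowthRate (N : ℝ) (a b : Env → ℝ) (ξ : ℝ → Env) (lam : ℝ) : Prop :=
  Tendsto (fun t : ℝ => (1 / t) * ∫ s in (0:ℝ)..t, (a (ξ s) * N - b (ξ s)))
    atTop (nhds lam)

/-! Right-continuity of `ξ` and the local finiteness of its switching times make the SIRS
equations hold as right derivatives at every `t ≥ 0`, with the coefficients of the regime
`ξ t`. The invariance of `∇` is then a comparison argument for the weighted function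
`f e^{K t}`: for `f = I` (with `K` bounding `a S - b` on `[0, t]`), then for
`f = N - S - I` and `f = S` (with `K = 0`), the inequality `f' + K f ≥ 0` holds wherever
`f < 0`, so `f` cannot leave `[0, ∞)`. Inside `∇` the same inequality holds everywhere for
`S` and `I` with suitable `K`, so `f e^{K t}` is nondecreasing and positivity persists. -/

open Set Topology

lemma HasDerivWithinAt.mul_exp_const_mul {f : ℝ → ℝ} {f' K x : ℝ} {s : Set ℝ}
    (hf : HasDerivWithinAt f f' s x) :
    HasDerivWithinAt (fun y => f y * Real.exp (K * y)) ((f' + K * f x) * Real.exp (K * x)) s x := by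
  have hexp : HasDerivAt (fun y => Real.exp (K * y)) (Real.exp (K * x) * K) x := by
    simpa using ((hasDerivAt_id x).const_mul K).exp
  exact (hf.mul hexp.hasDerivWithinAt).congr_deriv (by ring)

theorem image_nonneg_of_deriv_right_add_mul_nonneg_of_neg {f f' : ℝ → ℝ} {a b K : ℝ}
    (hf : ContinuousOn f (Icc a b)) (hf' : ∀ x ∈ Ico a b, HasDerivWithinAt f (f' x) (Ici x) x)
    (ha : 0 ≤ f a) (hK : ∀ x ∈ Ico a b, f x < 0 → 0 ≤ f' x + K * f x) :
    ∀ ⦃x⦄, x ∈ Icc a b → 0 ≤ f x := by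
  set g : ℝ → ℝ := fun x => -(f x * Real.exp (K * x))
  have hg : ContinuousOn g (Icc a b) := (hf.mul (by fun_prop)).neg
  have hg' : ∀ x ∈ Ico a b,
      HasDerivWithinAt g (-((f' x + K * f x) * Real.exp (K * x))) (Ici x) x :=
    fun x hx => (hf' x hx).mul_exp_const_mul.neg
  -- `g` can only touch the barrier `ε (1 + (x - a))` at a point where `f < 0`
  have barrier : ∀ ε > 0, ∀ x ∈ Icc a b, g x ≤ ε * (1 + (x - a)) := by
    intro ε hε
    refine image_le_of_deriv_right_lt_deriv_boundary' hg hg' ?_ (by fun_prop)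
      (fun x _ => ((((hasDerivAt_id x).sub_const a).const_add 1).const_mul ε).hasDerivWithinAt)
      fun x hx hgx => ?_
    · have := mul_nonneg ha (Real.exp_pos (K * a)).le
      simp only [g, sub_self, add_zero, mul_one]
      linarith
    · have hfx : f x < 0 := by
        have : 0 < g x := by rw [hgx]; exact mul_pos hε (by linarith [hx.1])
        exact neg_of_mul_neg_left (neg_pos.1 this) (Real.exp_pos (K * x)).le
      have := mul_nonneg (hK x hx hfx) (Real.exp_pos (K * x)).le
      simp only [mul_one]
      linarith
  intro x hx
  have hgx : g x ≤ 0 := le_of_forall_pos_le_add fun ε hε => by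
    have hpos : 0 < 1 + (x - a) := by linarith [hx.1]
    calc g x ≤ ε / (1 + (x - a)) * (1 + (x - a)) := barrier _ (div_pos hε hpos) x hx
      _ = 0 + ε := by field_simp; ring
  exact nonneg_of_mul_nonneg_left (neg_nonpos.1 hgx) (Real.exp_pos (K * x))

theorem image_pos_of_deriv_right_add_mul_nonneg {f f' : ℝ → ℝ} {a b K : ℝ}
    (hf : ContinuousOn f (Icc a b)) (hf' : ∀ x ∈ Ico a b, HasDerivWithinAt f (f' x) (Ici x) x)
    (ha : 0 < f a) (hK : ∀ x ∈ Ico a b, 0 ≤ f' x + K * f x) :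
    ∀ ⦃x⦄, x ∈ Icc a b → 0 < f x := by
  set g : ℝ → ℝ := fun x => -(f x * Real.exp (K * x))
  have hg : ContinuousOn g (Icc a b) := (hf.mul (by fun_prop)).neg
  have hg' : ∀ x ∈ Ico a b,
      HasDerivWithinAt g (-((f' x + K * f x) * Real.exp (K * x))) (Ici x) x :=
    fun x hx => (hf' x hx).mul_exp_const_mul.neg
  have hmono : ∀ ⦃x⦄, x ∈ Icc a b → g x ≤ g a :=
    image_le_of_deriv_right_le_deriv_boundary hg hg' le_rfl continuousOn_const
      (fun x _ => hasDerivWithinAt_const x _ _) fun x hx => by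
        have := mul_nonneg (hK x hx) (Real.exp_pos (K * x)).le
        linarith
  intro x hx
  have : 0 < f x * Real.exp (K * x) := by
    linarith [hmono hx, mul_pos ha (Real.exp_pos (K * a))]
  exact pos_of_mul_pos_left this (Real.exp_pos (K * x)).le

theorem hasDerivWithinAt_Ici_of_eventually_hasDerivAt {E : Type*} [NormedAddCommGroup E]
    [NormedSpace ℝ E] {f g : ℝ → E} {t : ℝ} (hf : ContinuousWithinAt f (Ici t) t)
    (hg : ContinuousWithinAt g (Ioi t) t) (hderiv : ∀ᶠ s in 𝓝[>] t, HasDerivAt f (g s) s) :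
    HasDerivWithinAt f (g t) (Ici t) t := by
  have hU : {s | HasDerivAt f (g s) s} ∩ Ioi t ∈ 𝓝[>] t := inter_mem hderiv self_mem_nhdsWithin
  refine hasDerivWithinAt_Ici_of_tendsto_deriv
    (fun s hs => hs.1.differentiableAt.differentiableWithinAt)
    (hf.mono fun s hs => le_of_lt (mem_Ioi.1 hs.2)) hU (hg.tendsto.congr' ?_)
  filter_upwards [hderiv] with s hs using hs.deriv.symm

theorem IsCompact.exists_forall_comp_mul_le {X α : Type*} [TopologicalSpace X] [Finite α]
    {K : Set X} (hK : IsCompact K) {f : X → ℝ} (hf : ContinuousOn f K) (g : α → ℝ) (ξ : X → α) :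
    ∃ M, ∀ x ∈ K, g (ξ x) * f x ≤ M := by
  obtain ⟨C, hC⟩ := hK.exists_bound_of_continuousOn hf
  obtain ⟨A, hA⟩ := Finite.bddAbove_range fun σ => |g σ|
  refine ⟨A * C, fun x hx => ?_⟩
  have hgA : |g (ξ x)| ≤ A := hA ⟨ξ x, rfl⟩
  calc g (ξ x) * f x ≤ |g (ξ x) * f x| := le_abs_self _
    _ = |g (ξ x)| * ‖f x‖ := abs_mul _ _
    _ ≤ A * C := mul_le_mul hgA (hC x hx) (norm_nonneg _) ((abs_nonneg _).trans hgA)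

theorem IsSwitchingSignal.eventually_contPt_and_eq {ξ : ℝ → Env} (hξ : IsSwitchingSignal ξ)
    {t : ℝ} (ht : 0 ≤ t) : ∀ᶠ s in 𝓝[>] t, ContPt ξ s ∧ ξ s = ξ t := by
  have hfin := hξ.2 (t + 1)
  have hnear : ∀ᶠ s in 𝓝[>] t, s ∉ {s | 0 ≤ s ∧ s ≤ t + 1 ∧ ¬ ContPt ξ s} \ {t} :=
    mem_nhdsWithin_of_mem_nhds (hfin.sdiff.isClosed.compl_mem_nhds fun h => h.2 rfl)
  filter_upwards [hnear, hξ.1 t ht |>.filter_mono (nhdsWithin_mono t Ioi_subset_Ici_self),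
    Ioo_mem_nhdsGT (by linarith : t < t + 1)] with s hs hξs hst
  exact ⟨by_contra fun hcon => hs ⟨⟨by linarith [hst.1], hst.2.le, hcon⟩, hst.1.ne'⟩, hξs⟩

namespace IsSIRSSolution

variable {N : ℝ} {a b c : Env → ℝ} {ξ : ℝ → Env} {S I : ℝ → ℝ}

theorem hasDerivWithinAt_Ici (hsol : IsSIRSSolution N a b c ξ S I) (hξ : IsSwitchingSignal ξ)
    {t : ℝ} (ht : 0 ≤ t) :
    HasDerivWithinAt S (-(a (ξ t) * S t * I t) + c (ξ t) * (N - S t - I t)) (Ici t) t ∧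
    HasDerivWithinAt I (a (ξ t) * S t * I t - b (ξ t) * I t) (Ici t) t := by
  have hS : ContinuousWithinAt S (Ici 0) t := hsol.1 t ht
  have hI : ContinuousWithinAt I (Ici 0) t := hsol.2.1 t ht
  have hIoi : Ioi t ⊆ Ici 0 := fun s hs => ht.trans (le_of_lt hs)
  have hIci : Ici t ⊆ Ici 0 := Ici_subset_Ici.2 ht
  have hderiv : ∀ᶠ s in 𝓝[>] t,
      HasDerivAt S (-(a (ξ t) * S s * I s) + c (ξ t) * (N - S s - I s)) s ∧
      HasDerivAt I (a (ξ t) * S s * I s - b (ξ t) * I s) s := by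
    filter_upwards [hξ.eventually_contPt_and_eq ht, self_mem_nhdsWithin]
      with s ⟨hcont, hξs⟩ hts
    have hs : 0 < s := ht.trans_lt hts
    obtain ⟨hS', hI'⟩ := hsol.2.2 s hs.le hcont
    rw [hξs] at hS' hI'
    exact ⟨hS'.hasDerivAt (Ici_mem_nhds hs), hI'.hasDerivAt (Ici_mem_nhds hs)⟩
  have hS_right := hS.mono hIoi
  have hI_right := hI.mono hIoi
  exact ⟨hasDerivWithinAt_Ici_of_eventually_hasDerivAt (hS.mono hIci) (by fun_prop)
      (hderiv.mono fun _ h => h.1),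
    hasDerivWithinAt_Ici_of_eventually_hasDerivAt (hI.mono hIci) (by fun_prop)
      (hderiv.mono fun _ h => h.2)⟩

theorem infected_nonneg (hsol : IsSIRSSolution N a b c ξ S I) (hξ : IsSwitchingSignal ξ)
    (hb : ∀ σ, 0 ≤ b σ) (hI0 : 0 ≤ I 0) {t : ℝ} (ht : 0 ≤ t) : 0 ≤ I t := by
  obtain ⟨M, hM⟩ := (isCompact_Icc (a := 0) (b := t)).exists_forall_comp_mul_le
    (hsol.1.mono Icc_subset_Ici_self) a ξ
  refine image_nonneg_of_deriv_right_add_mul_nonneg_of_neg (K := -M)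
    (hsol.2.1.mono Icc_subset_Ici_self) (fun x hx => (hsol.hasDerivWithinAt_Ici hξ hx.1).2) hI0
    (fun x hx hIx => ?_) ⟨ht, le_rfl⟩
  have hrate : a (ξ x) * S x - b (ξ x) - M ≤ 0 := by
    linarith [hM x (Ico_subset_Icc_self hx), hb (ξ x)]
  linarith [mul_nonneg_of_nonpos_of_nonpos hrate hIx.le]

theorem susceptible_add_infected_le (hsol : IsSIRSSolution N a b c ξ S I)
    (hξ : IsSwitchingSignal ξ) (hb : ∀ σ, 0 ≤ b σ) (hc : ∀ σ, 0 ≤ c σ) (hI0 : 0 ≤ I 0)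
    (hsum : S 0 + I 0 ≤ N) {t : ℝ} (ht : 0 ≤ t) : S t + I t ≤ N := by
  have hR := image_nonneg_of_deriv_right_add_mul_nonneg_of_neg
    (f := fun s => N - S s - I s) (K := 0)
    ((continuousOn_const.sub hsol.1).sub hsol.2.1 |>.mono Icc_subset_Ici_self)
    (fun x hx => ((hasDerivWithinAt_const x _ N).sub (hsol.hasDerivWithinAt_Ici hξ hx.1).1).sub
      (hsol.hasDerivWithinAt_Ici hξ hx.1).2)
    (by linarith) (fun x hx hRx => ?_) ⟨ht, le_rfl⟩
  · linarith
  · have := mul_nonneg (hb (ξ x)) (hsol.infected_nonneg hξ hb hI0 hx.1)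
    have := mul_nonpos_of_nonneg_of_nonpos (hc (ξ x)) hRx.le
    linarith

theorem susceptible_nonneg (hsol : IsSIRSSolution N a b c ξ S I) (hξ : IsSwitchingSignal ξ)
    (ha : ∀ σ, 0 ≤ a σ) (hb : ∀ σ, 0 ≤ b σ) (hc : ∀ σ, 0 ≤ c σ) (hS0 : 0 ≤ S 0) (hI0 : 0 ≤ I 0)
    (hsum : S 0 + I 0 ≤ N) {t : ℝ} (ht : 0 ≤ t) : 0 ≤ S t := by
  refine image_nonneg_of_deriv_right_add_mul_nonneg_of_neg (K := 0)
    (hsol.1.mono Icc_subset_Ici_self) (fun x hx => (hsol.hasDerivWithinAt_Ici hξ hx.1).1) hS0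
    (fun x hx hSx => ?_) ⟨ht, le_rfl⟩
  have := mul_nonpos_of_nonpos_of_nonneg (mul_nonpos_of_nonneg_of_nonpos (ha (ξ x)) hSx.le)
    (hsol.infected_nonneg hξ hb hI0 hx.1)
  have := mul_nonneg (hc (ξ x))
    (sub_nonneg.2 (hsol.susceptible_add_infected_le hξ hb hc hI0 hsum hx.1))
  linarith

theorem susceptible_pos (hsol : IsSIRSSolution N a b c ξ S I) (hξ : IsSwitchingSignal ξ)
    (hc : ∀ σ, 0 ≤ c σ) (hS : ∀ x, 0 ≤ x → 0 ≤ S x) (hsum : ∀ x, 0 ≤ x → S x + I x ≤ N)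
    (hS0 : 0 < S 0) {t : ℝ} (ht : 0 ≤ t) : 0 < S t := by
  obtain ⟨M, hM⟩ := (isCompact_Icc (a := 0) (b := t)).exists_forall_comp_mul_le
    (hsol.2.1.mono Icc_subset_Ici_self) a ξ
  refine image_pos_of_deriv_right_add_mul_nonneg (K := M)
    (hsol.1.mono Icc_subset_Ici_self) (fun x hx => (hsol.hasDerivWithinAt_Ici hξ hx.1).1) hS0
    (fun x hx => ?_) ⟨ht, le_rfl⟩
  have := mul_nonneg (sub_nonneg.2 (hM x (Ico_subset_Icc_self hx))) (hS x hx.1)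
  have := mul_nonneg (hc (ξ x)) (sub_nonneg.2 (hsum x hx.1))
  linarith

theorem infected_pos (hsol : IsSIRSSolution N a b c ξ S I) (hξ : IsSwitchingSignal ξ)
    (ha : ∀ σ, 0 ≤ a σ) (hS : ∀ x, 0 ≤ x → 0 ≤ S x) (hI : ∀ x, 0 ≤ x → 0 ≤ I x)
    (hI0 : 0 < I 0) {t : ℝ} (ht : 0 ≤ t) : 0 < I t := by
  obtain ⟨B, hB⟩ := Finite.bddAbove_range b
  refine image_pos_of_deriv_right_add_mul_nonneg (K := B)
    (hsol.2.1.mono Icc_subset_Ici_self) (fun x hx => (hsol.hasDerivWithinAt_Ici hξ hx.1).2) hI0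
    (fun x hx => ?_) ⟨ht, le_rfl⟩
  have := mul_nonneg (mul_nonneg (ha (ξ x)) (hS x hx.1)) (hI x hx.1)
  have := mul_nonneg (sub_nonneg.2 (hB ⟨ξ x, rfl⟩)) (hI x hx.1)
  linarith

end IsSIRSSolution

theorem sirs_triangle_invariant_general
    (N : ℝ) (a b c : Env → ℝ)
    (ha : ∀ σ, 0 < a σ) (hb : ∀ σ, 0 < b σ) (hc : ∀ σ, 0 < c σ)
    (ξ : ℝ → Env) (hξ : IsSwitchingSignal ξ)
    (S I : ℝ → ℝ) (hsol : IsSIRSSolution N a b c ξ S I)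
    (hS0 : 0 ≤ S 0) (hI0 : 0 ≤ I 0) (hsum : S 0 + I 0 ≤ N) :
    (∀ t : ℝ, 0 ≤ t → 0 ≤ S t ∧ 0 ≤ I t ∧ S t + I t ≤ N) ∧
    (0 < S 0 → 0 < I 0 → ∀ t : ℝ, 0 ≤ t → 0 < S t ∧ 0 < I t) := by
  have ha' σ := (ha σ).le
  have hb' σ := (hb σ).le
  have hc' σ := (hc σ).le
  have hS (t : ℝ) : 0 ≤ t → 0 ≤ S t := hsol.susceptible_nonneg hξ ha' hb' hc' hS0 hI0 hsum
  have hI (t : ℝ) : 0 ≤ t → 0 ≤ I t := hsol.infected_nonneg hξ hb' hI0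
  have hR (t : ℝ) : 0 ≤ t → S t + I t ≤ N := hsol.susceptible_add_infected_le hξ hb' hc' hI0 hsum
  refine ⟨fun t ht => ⟨hS t ht, hI t ht, hR t ht⟩, fun hS0' hI0' t ht => ⟨?_, ?_⟩⟩
  · exact hsol.susceptible_pos hξ hc' hS hR hS0' ht
  · exact hsol.infected_pos hξ ha' hS hI hI0' ht

/-- solutions starting in the triangle `∇` stay in `∇`;
moreover solutions with positive initial data stay positive. -/
theorem sirs_triangle_invariant
    (N : ℝ) (hN : 0 < N) (a b c : Env → ℝ)
    (ha : ∀ σ, 0 < a σ) (hb : ∀ σ, 0 < b σ) (hc : ∀ σ, 0 < c σ)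
    (ξ : ℝ → Env) (hξ : IsSwitchingSignal ξ)
    (S I : ℝ → ℝ) (hsol : IsSIRSSolution N a b c ξ S I)
    (hS0 : 0 ≤ S 0) (hI0 : 0 ≤ I 0) (hsum : S 0 + I 0 ≤ N) :
    (∀ t : ℝ, 0 ≤ t → 0 ≤ S t ∧ 0 ≤ I t ∧ S t + I t ≤ N) ∧
    (0 < S 0 → 0 < I 0 → ∀ t : ℝ, 0 ≤ t → 0 < S t ∧ 0 < I t) :=
  sirs_triangle_invariant_general N a b c ha hb hc ξ hξ S I hsol hS0 hI0 hsum
end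

section
/- Suppose the switching signal ξ has mean growth rate λ > 0, and let (S, I) be a solution of the switched SIRS system with S(0) > 0, I(0) > 0 and S(0) + I(0) ≤ N. Then liminf_{t→∞} (1/t)·∫₀ᵗ I(s) ds ≥ c_min·λ / ((a_max·N + c_max)·a_max) > 0; in particular limsup_{t→∞} I(t) ≥ c_min·λ / ((a_max·N + c_max)·a_max) > 0. -/
/-!
Along a solution the region `S ≥ 0`, `I > 0`, `S + I ≤ N` is invariant. On it the Lyapunov
function `V = log I + (a_max / c_min) S` has right derivative at least `a(ξ) N - b(ξ) - C I`
with `C = a_max (a_max N + c_max) / c_min`: the term `a(ξ) (N - S)` missing from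
`(log I)' = a S - b` is paid for by `c (N - S - I) ≥ c_min (N - S) - c_max I` in `S'`.
Integrating and using that `V` is bounded above, `∫₀ᵗ (a N - b) ≤ K + C ∫₀ᵗ I`; dividing by `t`,
the time averages of `I` have liminf at least `λ / C = ρ`, and the limsup of a bounded function
dominates the liminf of its time averages.
-/

open Filter MeasureTheory

open Set Topology

theorem IsSwitchingSignal.hasDerivWithinAt_Ici {ξ : ℝ → Env} (hξ : IsSwitchingSignal ξ)
    {f : ℝ → ℝ} {G : Env → ℝ → ℝ} (hf : ContinuousOn f (Ici 0))
    (hG : ∀ σ, ContinuousOn (G σ) (Ici 0))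
    (hder : ∀ s, 0 ≤ s → ContPt ξ s → HasDerivWithinAt f (G (ξ s) s) (Ici 0) s)
    {t : ℝ} (ht : 0 ≤ t) : HasDerivWithinAt f (G (ξ t) t) (Ici t) t := by
  -- `ξ` is frozen on some `[t, u)`, so on `(t, u)` the derivative is `G (ξ t)`, which is
  -- continuous up to `t`.
  obtain ⟨u, htu, hconst⟩ := mem_nhdsGE_iff_exists_Ico_subset.1 (hξ.1 t ht)
  have hderAt : ∀ s ∈ Ioo t u, HasDerivAt f (G (ξ t) s) s := by
    intro s hs
    have hs0 : 0 < s := ht.trans_lt hs.1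
    have hcont : ContPt ξ s := by
      filter_upwards [mem_nhdsWithin_of_mem_nhds (isOpen_Ioo.mem_nhds hs)] with w hw
      rw [hconst ⟨hw.1.le, hw.2⟩, hconst ⟨hs.1.le, hs.2⟩]
    rw [← show ξ s = ξ t from hconst ⟨hs.1.le, hs.2⟩]
    exact (hder s hs0.le hcont).hasDerivAt (Ici_mem_nhds hs0)
  refine hasDerivWithinAt_Ici_of_tendsto_deriv
    (fun s hs => (hderAt s hs).differentiableAt.differentiableWithinAt)
    ((hf t ht).mono fun x hx => ht.trans hx.1.le) (Ioo_mem_nhdsGT htu) ?_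
  have hGt : Tendsto (G (ξ t)) (𝓝[>] t) (𝓝 (G (ξ t) t)) :=
    ((hG _) t ht).mono_left (nhdsWithin_mono _ fun x hx => ht.trans (le_of_lt hx))
  refine hGt.congr' ?_
  filter_upwards [Ioo_mem_nhdsGT htu] with s hs using (hderAt s hs).deriv.symm

theorem exists_forall_norm_le_of_continuousOn {s : Set ℝ} (hs : IsCompact s)
    {K : Env → ℝ → ℝ} (hK : ∀ σ, ContinuousOn (K σ) s) :
    ∃ C, ∀ σ, ∀ x ∈ s, ‖K σ x‖ ≤ C := by
  obtain ⟨C₁, h₁⟩ := hs.exists_bound_of_continuousOn (hK true)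
  obtain ⟨C₂, h₂⟩ := hs.exists_bound_of_continuousOn (hK false)
  refine ⟨max C₁ C₂, ?_⟩
  rintro (_ | _) x hx
  · exact (h₂ x hx).trans (le_max_right _ _)
  · exact (h₁ x hx).trans (le_max_left _ _)

theorem IsSwitchingSignal.integrableOn_Icc {ξ : ℝ → Env} (hξ : IsSwitchingSignal ξ)
    {K : Env → ℝ → ℝ} (hK : ∀ σ, ContinuousOn (K σ) (Ici 0)) (T : ℝ) :
    IntegrableOn (fun s => K (ξ s) s) (Icc 0 T) := by
  set F := {s : ℝ | 0 ≤ s ∧ s ≤ T ∧ ¬ ContPt ξ s}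
  have hcont : ContinuousOn (fun s => K (ξ s) s) (Icc 0 T \ F) := by
    rintro s ⟨hs, hsF⟩
    have hξs : ContPt ξ s := by
      by_contra h
      exact hsF ⟨hs.1, hs.2, h⟩
    refine ((hK (ξ s) s hs.1).mono fun x hx => hx.1.1).congr_of_eventuallyEq ?_ rfl
    filter_upwards [hξs.filter_mono (nhdsWithin_mono s fun x hx => hx.1.1)] with x hx
    rw [hx]
  have hae : Icc 0 T \ F =ᵐ[volume] Icc 0 T :=
    sdiff_ae_eq_self.2 (measure_mono_null inter_subset_right ((hξ.2 T).measure_zero _))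
  obtain ⟨C, hC⟩ := exists_forall_norm_le_of_continuousOn isCompact_Icc
    fun σ => (hK σ).mono fun x hx => hx.1
  refine ⟨?_, HasFiniteIntegral.restrict_of_bounded (C := C) measure_Icc_lt_top
    ((ae_restrict_iff' measurableSet_Icc).2 (Eventually.of_forall fun s hs => hC _ s hs))⟩
  rw [← Measure.restrict_congr_set hae]
  exact hcont.aestronglyMeasurable (measurableSet_Icc.diff (hξ.2 T).measurableSet)

theorem nonneg_of_deriv_right_nonneg_of_neg {w W : ℝ → ℝ} {a b : ℝ}
    (hw : ContinuousOn w (Icc a b)) (hder : ∀ x ∈ Ico a b, HasDerivWithinAt w (W x) (Ici x) x)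
    (ha : 0 ≤ w a) (hW : ∀ x ∈ Ico a b, w x < 0 → 0 ≤ W x) :
    ∀ x ∈ Icc a b, 0 ≤ w x := by
  intro x hx
  have hxa : 0 < 1 + (x - a) := by linarith [hx.1]
  refine le_of_forall_pos_le_add fun δ hδ => ?_
  -- `-w` cannot cross the strictly increasing barrier `ε (1 + (y - a))`: it could only reach it
  -- where `w < 0`, and there `-W ≤ 0 < ε`.
  set ε := δ / (1 + (x - a))
  have hε : 0 < ε := div_pos hδ hxa
  have hbarrier := image_le_of_deriv_right_lt_deriv_boundary' (f := fun y => -w y)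
    (B := fun y => ε * (1 + (y - a))) hw.neg (fun y hy => (hder y hy).neg) (by linarith)
    (by fun_prop)
    (fun y _ => (((hasDerivAt_id y).sub_const a).const_add 1).const_mul ε |>.hasDerivWithinAt)
    (fun y hy hwy => by
      have := hW y hy (by nlinarith [hy.1])
      simp only [mul_one]
      linarith) hx
  have : ε * (1 + (x - a)) = δ := div_mul_cancel₀ δ hxa.ne'
  linarith

theorem growth_rate_le_lyapunov_rate {N S I a b c amax cmin cmax : ℝ}
    (hS : 0 ≤ S) (hI : 0 ≤ I) (hSI : S + I ≤ N) (ha : 0 ≤ a) (ha' : a ≤ amax)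
    (hcmin : 0 < cmin) (hc : cmin ≤ c) (hc' : c ≤ cmax) :
    a * N - b - amax * (amax * N + cmax) / cmin * I ≤
      (a * S - b) + amax / cmin * (-(a * S * I) + c * (N - S - I)) := by
  have hk : 0 ≤ amax / cmin := div_nonneg (ha.trans ha') hcmin.le
  have hkc : a ≤ amax / cmin * c := calc
    a ≤ amax := ha'
    _ = amax / cmin * cmin := (div_mul_cancel₀ _ hcmin.ne').symm
    _ ≤ amax / cmin * c := mul_le_mul_of_nonneg_left hc hk
  have haS : a * S ≤ amax * N := mul_le_mul ha' (by linarith) hS (ha.trans ha')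
  have h₁ : a * (N - S) ≤ amax / cmin * c * (N - S) :=
    mul_le_mul_of_nonneg_right hkc (by linarith)
  have h₂ : 0 ≤ amax / cmin * I * ((amax * N - a * S) + (cmax - c)) :=
    mul_nonneg (mul_nonneg hk hI) (by linarith)
  have hC : amax * (amax * N + cmax) / cmin = amax / cmin * (amax * N + cmax) := by ring
  rw [hC]
  linarith

variable {N : ℝ} {a b c : Env → ℝ} {ξ : ℝ → Env} {S I : ℝ → ℝ}

namespace IsSIRSSolution

theorem hasDerivWithinAt_S (hsol : IsSIRSSolution N a b c ξ S I) (hξ : IsSwitchingSignal ξ)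
    {t : ℝ} (ht : 0 ≤ t) :
    HasDerivWithinAt S (-(a (ξ t) * S t * I t) + c (ξ t) * (N - S t - I t)) (Ici t) t := by
  obtain ⟨hS, hI, hode⟩ := hsol
  exact hξ.hasDerivWithinAt_Ici (G := fun σ s => -(a σ * S s * I s) + c σ * (N - S s - I s)) hS
    (fun σ => by fun_prop) (fun s hs hs' => (hode s hs hs').1) ht

theorem hasDerivWithinAt_I (hsol : IsSIRSSolution N a b c ξ S I) (hξ : IsSwitchingSignal ξ)
    {t : ℝ} (ht : 0 ≤ t) :
    HasDerivWithinAt I (a (ξ t) * S t * I t - b (ξ t) * I t) (Ici t) t := by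
  obtain ⟨hS, hI, hode⟩ := hsol
  exact hξ.hasDerivWithinAt_Ici (G := fun σ s => a σ * S s * I s - b σ * I s) hI
    (fun σ => by fun_prop) (fun s hs hs' => (hode s hs hs').2) ht

theorem infectives_pos (hsol : IsSIRSSolution N a b c ξ S I) (hξ : IsSwitchingSignal ξ)
    (hI0 : 0 < I 0) {t : ℝ} (ht : 0 ≤ t) : 0 < I t := by
  obtain ⟨L, hL⟩ := exists_forall_norm_le_of_continuousOn (isCompact_Icc (a := 0) (b := t))
    (K := fun σ s => a σ * S s - b σ)
    fun σ => ((hsol.1.mono Icc_subset_Ici_self).const_mul _).sub continuousOn_const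
  -- `|I'| ≤ L I` on `[0, t]`, so `I` stays above the faster decaying barrier `I 0 e^{-(L+1) s}`.
  have hbarrier := image_le_of_deriv_right_lt_deriv_boundary' (a := 0) (b := t)
    (f := fun s => -I s) (B := fun s => -(I 0 * Real.exp (-(L + 1) * s)))
    (B' := fun s => (L + 1) * (I 0 * Real.exp (-(L + 1) * s)))
    (hsol.2.1.mono Icc_subset_Ici_self).neg (fun y hy => (hsol.hasDerivWithinAt_I hξ hy.1).neg)
    (by simp) (by fun_prop)
    (fun y _ => (((hasDerivAt_id y).const_mul (-(L + 1))).exp.const_mul (I 0)).neg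
      |>.hasDerivWithinAt.congr_deriv (by simp only [id, mul_one]; ring))
    (fun y hy hIy => by
      have hIy' : I y = I 0 * Real.exp (-(L + 1) * y) := by linarith
      have hpos : 0 < I y := hIy' ▸ mul_pos hI0 (Real.exp_pos _)
      have hLy := abs_le.1 (hL (ξ y) y (Ico_subset_Icc_self hy))
      rw [← hIy']
      nlinarith [hLy.1])
    ⟨ht, le_rfl⟩
  have := mul_pos hI0 (Real.exp_pos (-(L + 1) * t))
  linarith

theorem recovered_nonneg (hsol : IsSIRSSolution N a b c ξ S I) (hξ : IsSwitchingSignal ξ)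
    (hb : ∀ σ, 0 ≤ b σ) (hc : ∀ σ, 0 ≤ c σ) (hI0 : 0 < I 0) (hsum : S 0 + I 0 ≤ N)
    {t : ℝ} (ht : 0 ≤ t) : 0 ≤ N - S t - I t := by
  have hS := hsol.1.mono (Icc_subset_Ici_self : Icc 0 t ⊆ Ici 0)
  have hI := hsol.2.1.mono (Icc_subset_Ici_self : Icc 0 t ⊆ Ici 0)
  refine nonneg_of_deriv_right_nonneg_of_neg (w := fun s => N - S s - I s) (by fun_prop)
    (W := fun s => b (ξ s) * I s - c (ξ s) * (N - S s - I s))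
    (fun y hy => (((hasDerivWithinAt_const y _ N).sub (hsol.hasDerivWithinAt_S hξ hy.1)).sub
      (hsol.hasDerivWithinAt_I hξ hy.1)).congr_deriv (by ring))
    (by linarith) (fun y hy hR => ?_) t ⟨ht, le_rfl⟩
  have := mul_nonneg (hb (ξ y)) (hsol.infectives_pos hξ hI0 hy.1).le
  have := mul_nonpos_of_nonneg_of_nonpos (hc (ξ y)) hR.le
  linarith

theorem susceptibles_nonneg (hsol : IsSIRSSolution N a b c ξ S I) (hξ : IsSwitchingSignal ξ)
    (ha : ∀ σ, 0 ≤ a σ) (hb : ∀ σ, 0 ≤ b σ) (hc : ∀ σ, 0 ≤ c σ) (hS0 : 0 ≤ S 0)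
    (hI0 : 0 < I 0) (hsum : S 0 + I 0 ≤ N) {t : ℝ} (ht : 0 ≤ t) : 0 ≤ S t := by
  refine nonneg_of_deriv_right_nonneg_of_neg (hsol.1.mono Icc_subset_Ici_self)
    (fun y hy => hsol.hasDerivWithinAt_S hξ hy.1) hS0 (fun y hy hS => ?_) t ⟨ht, le_rfl⟩
  have := mul_nonpos_of_nonneg_of_nonpos
    (mul_nonneg (ha (ξ y)) (hsol.infectives_pos hξ hI0 hy.1).le) hS.le
  have := mul_nonneg (hc (ξ y)) (hsol.recovered_nonneg hξ hb hc hI0 hsum hy.1)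
  nlinarith

theorem abs_infectives_le (hsol : IsSIRSSolution N a b c ξ S I) (hξ : IsSwitchingSignal ξ)
    (ha : ∀ σ, 0 ≤ a σ) (hb : ∀ σ, 0 ≤ b σ) (hc : ∀ σ, 0 ≤ c σ) (hS0 : 0 ≤ S 0)
    (hI0 : 0 < I 0) (hsum : S 0 + I 0 ≤ N) {t : ℝ} (ht : 0 ≤ t) : |I t| ≤ N := by
  rw [abs_of_pos (hsol.infectives_pos hξ hI0 ht)]
  linarith [hsol.susceptibles_nonneg hξ ha hb hc hS0 hI0 hsum ht,
    hsol.recovered_nonneg hξ hb hc hI0 hsum ht]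

theorem integral_growth_rate_le (hsol : IsSIRSSolution N a b c ξ S I) (hξ : IsSwitchingSignal ξ)
    {amax cmin cmax : ℝ} (ha : ∀ σ, 0 ≤ a σ) (ha' : ∀ σ, a σ ≤ amax)
    (hb : ∀ σ, 0 ≤ b σ) (hcmin : 0 < cmin) (hc : ∀ σ, cmin ≤ c σ) (hc' : ∀ σ, c σ ≤ cmax)
    (hS0 : 0 ≤ S 0) (hI0 : 0 < I 0) (hsum : S 0 + I 0 ≤ N) {t : ℝ} (ht : 0 ≤ t) :
    ∫ s in (0:ℝ)..t, (a (ξ s) * N - b (ξ s)) ≤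
      (Real.log N - Real.log (I 0) + amax / cmin * N) +
        amax * (amax * N + cmax) / cmin * ∫ s in (0:ℝ)..t, I s := by
  set k := amax / cmin
  set C := amax * (amax * N + cmax) / cmin
  have hc₀ : ∀ σ, 0 ≤ c σ := fun σ => hcmin.le.trans (hc σ)
  have hI := fun s (hs : 0 ≤ s) => hsol.infectives_pos hξ hI0 hs
  have hS := fun s (hs : 0 ≤ s) => hsol.susceptibles_nonneg hξ ha hb hc₀ hS0 hI0 hsum hs
  have hR := fun s (hs : 0 ≤ s) => hsol.recovered_nonneg hξ hb hc₀ hI0 hsum hs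
  have hSc := hsol.1.mono (Icc_subset_Ici_self : Icc 0 t ⊆ Ici 0)
  have hIc := hsol.2.1.mono (Icc_subset_Ici_self : Icc 0 t ⊆ Ici 0)
  have hV : ∫ s in (0:ℝ)..t, (a (ξ s) * N - b (ξ s) - C * I s) ≤
      (Real.log (I t) + k * S t) - (Real.log (I 0) + k * S 0) := by
    refine intervalIntegral.integral_le_sub_of_hasDeriv_right_of_le ht
      ((hIc.log fun s hs => (hI s hs.1).ne').add (hSc.const_mul k))
      (fun x hx => (((hsol.hasDerivWithinAt_I hξ hx.1.le).log (hI x hx.1.le).ne').add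
        ((hsol.hasDerivWithinAt_S hξ hx.1.le).const_mul k)).mono Ioi_subset_Ici_self)
      (hξ.integrableOn_Icc (K := fun σ s => a σ * N - b σ - C * I s)
        (fun σ => continuousOn_const.sub (hsol.2.1.const_mul C)) t) fun x hx => ?_
    have hIx := hI x hx.1.le
    rw [show (a (ξ x) * S x * I x - b (ξ x) * I x) / I x = a (ξ x) * S x - b (ξ x) by
      field_simp]
    exact growth_rate_le_lyapunov_rate (hS x hx.1.le) hIx.le (by linarith [hR x hx.1.le])
      (ha _) (ha' _) hcmin (hc _) (hc' _)
  have hsplit : ∫ s in (0:ℝ)..t, (a (ξ s) * N - b (ξ s) - C * I s) =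
      (∫ s in (0:ℝ)..t, (a (ξ s) * N - b (ξ s))) - C * ∫ s in (0:ℝ)..t, I s := by
    rw [intervalIntegral.integral_sub, intervalIntegral.integral_const_mul]
    · exact (intervalIntegrable_iff_integrableOn_Icc_of_le ht).2
        (hξ.integrableOn_Icc (K := fun σ _ => a σ * N - b σ) (fun σ => continuousOn_const) t)
    · exact (hIc.intervalIntegrable_of_Icc ht).const_mul C
  have hlog := Real.log_le_log (hI t ht)
    (abs_le.1 (hsol.abs_infectives_le hξ ha hb hc₀ hS0 hI0 hsum ht)).2
  have hk : 0 ≤ k := div_nonneg ((ha true).trans (ha' true)) hcmin.le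
  have := mul_le_mul_of_nonneg_left (show S t ≤ N by linarith [hI t ht, hR t ht]) hk
  have := mul_nonneg hk hS0
  linarith

end IsSIRSSolution

noncomputable def timeAverage (f : ℝ → ℝ) (t : ℝ) : ℝ := 1 / t * ∫ s in (0:ℝ)..t, f s

theorem eventually_abs_timeAverage_le {f : ℝ → ℝ} {M : ℝ}
    (hM : ∀ s, 0 ≤ s → |f s| ≤ M) :
    ∀ᶠ t in atTop, |timeAverage f t| ≤ M := by
  filter_upwards [eventually_gt_atTop 0] with t ht
  have h := intervalIntegral.norm_integral_le_of_norm_le_const (a := 0) (b := t) (f := f)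
    fun x hx => hM x (uIoc_of_le ht.le ▸ hx).1.le
  rw [Real.norm_eq_abs, sub_zero, abs_of_pos ht] at h
  rw [timeAverage, abs_mul, abs_of_pos (one_div_pos.2 ht)]
  calc 1 / t * |∫ s in (0:ℝ)..t, f s| ≤ 1 / t * (M * t) := by gcongr
    _ = M := by field_simp

theorem le_liminf_timeAverage_of_integral_le {f g : ℝ → ℝ} {K C lam M : ℝ} (hC : 0 < C)
    (hg : Tendsto (timeAverage g) atTop (𝓝 lam))
    (hle : ∀ t, 0 < t → ∫ s in (0:ℝ)..t, g s ≤ K + C * ∫ s in (0:ℝ)..t, f s)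
    (hM : ∀ s, 0 ≤ s → |f s| ≤ M) :
    lam / C ≤ liminf (timeAverage f) atTop := by
  have hψ : Tendsto (fun t => (timeAverage g t - K / t) / C) atTop (𝓝 (lam / C)) := by
    simpa using (hg.sub (tendsto_const_nhds.div_atTop tendsto_id)).div_const C
  have hψf : ∀ᶠ t in atTop, (timeAverage g t - K / t) / C ≤ timeAverage f t := by
    filter_upwards [eventually_gt_atTop 0] with t ht
    have := mul_le_mul_of_nonneg_left (hle t ht) (one_div_pos.2 ht).le
    rw [div_le_iff₀ hC, timeAverage, timeAverage]
    calc 1 / t * (∫ s in (0:ℝ)..t, g s) - K / t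
        ≤ 1 / t * (K + C * ∫ s in (0:ℝ)..t, f s) - K / t := by linarith
      _ = 1 / t * (∫ s in (0:ℝ)..t, f s) * C := by ring
  calc lam / C = liminf (fun t => (timeAverage g t - K / t) / C) atTop := hψ.liminf_eq.symm
    _ ≤ liminf (timeAverage f) atTop :=
      liminf_le_liminf hψf hψ.isBoundedUnder_ge <| isCoboundedUnder_ge_of_eventually_le atTop <|
        (eventually_abs_timeAverage_le hM).mono fun _ ht => (abs_le.1 ht).2

theorem liminf_timeAverage_le_limsup {f : ℝ → ℝ} {M : ℝ}
    (hf : ∀ t, 0 ≤ t → IntervalIntegrable f volume 0 t)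
    (hM : ∀ s, 0 ≤ s → |f s| ≤ M) :
    liminf (timeAverage f) atTop ≤ limsup f atTop := by
  have hfM : IsBoundedUnder (· ≤ ·) atTop f := isBoundedUnder_of_eventually_le (a := M) <| by
    filter_upwards [eventually_ge_atTop 0] with s hs using (abs_le.1 (hM s hs)).2
  refine le_of_forall_gt_imp_ge_of_dense fun β hβ => ?_
  obtain ⟨t₀, ht₀⟩ := eventually_atTop.1
    ((eventually_lt_of_limsup_lt hβ hfM).and (eventually_ge_atTop 0))
  have h0 : 0 ≤ t₀ := (ht₀ t₀ le_rfl).2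
  set D := (∫ s in (0:ℝ)..t₀, f s) - t₀ * β
  have hbound : ∀ᶠ t in atTop, timeAverage f t ≤ D / t + β := by
    filter_upwards [eventually_gt_atTop t₀] with t ht
    have ht0 : 0 < t := h0.trans_lt ht
    have htail : IntervalIntegrable f volume t₀ t :=
      (hf t ht0.le).mono_set (by rw [uIcc_of_le ht0.le, uIcc_of_le ht.le]; gcongr)
    have hβtail : ∫ s in t₀..t, f s ≤ (t - t₀) * β := by
      simpa using intervalIntegral.integral_mono_on ht.le htail intervalIntegrable_const
        fun x hx => (ht₀ x hx.1).1.le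
    rw [timeAverage, ← intervalIntegral.integral_add_adjacent_intervals (hf t₀ h0) htail]
    calc 1 / t * ((∫ s in (0:ℝ)..t₀, f s) + ∫ s in t₀..t, f s)
        ≤ 1 / t * ((∫ s in (0:ℝ)..t₀, f s) + (t - t₀) * β) := by gcongr
      _ = D / t + β := by field_simp; ring
  have hlim : Tendsto (fun t => D / t + β) atTop (𝓝 β) := by
    simpa using (tendsto_const_nhds.div_atTop tendsto_id).add_const β
  calc liminf (timeAverage f) atTop ≤ liminf (fun t => D / t + β) atTop :=
        liminf_le_liminf hbound (isBoundedUnder_of_eventually_ge <|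
          (eventually_abs_timeAverage_le hM).mono fun _ ht => (abs_le.1 ht).1)
          hlim.isCoboundedUnder_ge
    _ = β := hlim.liminf_eq

/-- if `λ > 0` then the time-averages of `I` are ultimately
bounded below by `c_min·λ/((a_max·N + c_max)·a_max) > 0`; in particular
`limsup_{t→∞} I(t)` is at least this positive constant. -/
theorem sirs_average_infectives_lower_bound
    (N : ℝ) (hN : 0 < N) (a b c : Env → ℝ)
    (ha : ∀ σ, 0 < a σ) (hb : ∀ σ, 0 < b σ) (hc : ∀ σ, 0 < c σ)
    (ξ : ℝ → Env) (hξ : IsSwitchingSignal ξ)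
    (lam : ℝ) (hlam : 0 < lam) (hmean : HasMeanGrowthRate N a b ξ lam)
    (S I : ℝ → ℝ) (hsol : IsSIRSSolution N a b c ξ S I)
    (hS0 : 0 < S 0) (hI0 : 0 < I 0) (hsum : S 0 + I 0 ≤ N)
    (ρ : ℝ)
    (hρ : ρ = min (c true) (c false) * lam /
      ((max (a true) (a false) * N + max (c true) (c false)) * max (a true) (a false))) :
    0 < ρ ∧
    ρ ≤ Filter.liminf (fun t : ℝ => (1 / t) * ∫ s in (0:ℝ)..t, I s) Filter.atTop ∧
    ρ ≤ Filter.limsup I Filter.atTop := by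
  set amax := max (a true) (a false)
  set cmin := min (c true) (c false)
  set cmax := max (c true) (c false)
  have le_amax : ∀ σ, a σ ≤ amax := by rintro (_ | _) <;> simp [amax]
  have cmin_le : ∀ σ, cmin ≤ c σ := by rintro (_ | _) <;> simp [cmin]
  have le_cmax : ∀ σ, c σ ≤ cmax := by rintro (_ | _) <;> simp [cmax]
  have hamax : 0 < amax := (ha true).trans_le (le_amax true)
  have hcmin : 0 < cmin := lt_min (hc true) (hc false)
  have hcmax : 0 < cmax := (hc true).trans_le (le_cmax true)
  have hIN : ∀ t, 0 ≤ t → |I t| ≤ N := fun t ht =>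
    hsol.abs_infectives_le hξ (fun σ => (ha σ).le) (fun σ => (hb σ).le) (fun σ => (hc σ).le)
      hS0.le hI0 hsum ht
  have hρC : ρ = lam / (amax * (amax * N + cmax) / cmin) := by
    rw [hρ]
    field_simp
  have hliminf : ρ ≤ liminf (timeAverage I) atTop := hρC ▸
    le_liminf_timeAverage_of_integral_le (by positivity) hmean
      (fun t ht => hsol.integral_growth_rate_le hξ (fun σ => (ha σ).le) le_amax
        (fun σ => (hb σ).le) hcmin cmin_le le_cmax hS0.le hI0 hsum ht.le) hIN
  refine ⟨by rw [hρ]; positivity, hliminf, hliminf.trans ?_⟩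
  exact liminf_timeAverage_le_limsup
    (fun t ht => (hsol.2.1.mono Icc_subset_Ici_self).intervalIntegrable_of_Icc ht) hIN
end

section
/- Suppose the switching signal ξ has mean growth rate λ ∈ ℝ, and let (S, I) be a solution of the switched SIRS system with S(0) > 0, I(0) > 0 and S(0) + I(0) ≤ N. Then limsup_{t→∞} (log I(t))/t ≤ λ. -/
open Filter MeasureTheory

/-!
Since `I' = (a S - b) I`, the infectives are `I t = I 0 * exp ∫₀ᵗ (a(ξ) S - b(ξ))`, hence
nonnegative. With the integrating factor `exp ∫₀ᵗ c(ξ)` the SIRS equations give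
`((S + I - N) exp ∫₀ᵗ c(ξ))' = -b(ξ) I exp ∫₀ᵗ c(ξ) ≤ 0`, so `S ≤ S + I ≤ N` for all times and
`log I t ≤ log I 0 + ∫₀ᵗ (a(ξ) N - b(ξ))`; dividing by `t` gives the bound. The switching times
form a countable set, off which every function involved is differentiable, so each of these
identities follows from the fundamental theorem of calculus off a countable set.
-/

open Set Topology

def switchTimes (ξ : ℝ → Env) : Set ℝ := {t | 0 ≤ t ∧ ¬ ContPt ξ t}

lemma IsSwitchingSignal.countable_switchTimes {ξ : ℝ → Env} (hξ : IsSwitchingSignal ξ) :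
    (switchTimes ξ).Countable := by
  refine (countable_iUnion fun n : ℕ => (hξ.2 n).countable).mono fun t ht => ?_
  exact mem_iUnion.2 ⟨⌈t⌉₊, ht.1, Nat.le_ceil t, ht.2⟩

lemma ContPt.eventually_eq {ξ : ℝ → Env} {t : ℝ} (h : ContPt ξ t) (ht : 0 < t) :
    ∀ᶠ s in 𝓝 t, ξ s = ξ t := by
  rwa [ContPt, nhdsWithin_eq_nhds.2 (Ici_mem_nhds ht)] at h

section Switched

variable {ξ : ℝ → Env} {F : Env → ℝ → ℝ}

lemma ContPt.continuousAt_switched (hF : ∀ σ, ContinuousOn (F σ) (Ici 0)) {t : ℝ}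
    (h : ContPt ξ t) (ht : 0 < t) : ContinuousAt (fun s => F (ξ s) s) t := by
  refine ((hF (ξ t)).continuousAt (Ici_mem_nhds ht)).congr ?_
  filter_upwards [h.eventually_eq ht] with s hs
  simp only [hs]

lemma aestronglyMeasurable_switched (hD : (switchTimes ξ).Countable)
    (hF : ∀ σ, ContinuousOn (F σ) (Ici 0)) :
    AEStronglyMeasurable (fun s => F (ξ s) s) (volume.restrict (Ioi 0)) := by
  have hcont : ContinuousOn (fun s => F (ξ s) s) (Ioi 0 \ switchTimes ξ) :=
    fun t ht => (ContPt.continuousAt_switched hF (not_not.1 fun h => ht.2 ⟨le_of_lt ht.1, h⟩)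
      ht.1).continuousWithinAt
  rw [← Measure.restrict_congr_set (sdiff_null_ae_eq_self (hD.measure_zero volume))]
  exact (hcont.aemeasurable (measurableSet_Ioi.diff hD.measurableSet)).aestronglyMeasurable

lemma intervalIntegrable_switched (hD : (switchTimes ξ).Countable)
    (hF : ∀ σ, ContinuousOn (F σ) (Ici 0)) {T : ℝ} (hT : 0 ≤ T) :
    IntervalIntegrable (fun s => F (ξ s) s) volume 0 T := by
  rw [intervalIntegrable_iff_integrableOn_Ioc_of_le hT]
  have hdom : IntegrableOn (fun s => ‖F true s‖ + ‖F false s‖) (Icc 0 T) :=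
    ((hF true).mono Icc_subset_Ici_self).integrableOn_Icc.norm.add
      ((hF false).mono Icc_subset_Ici_self).integrableOn_Icc.norm
  refine (hdom.mono_set Ioc_subset_Icc_self).mono'
    ((aestronglyMeasurable_switched hD hF).mono_set Ioc_subset_Ioi_self)
    (Eventually.of_forall fun s => ?_)
  cases ξ s <;> simp

lemma continuousOn_primitive_switched (hD : (switchTimes ξ).Countable)
    (hF : ∀ σ, ContinuousOn (F σ) (Ici 0)) :
    ContinuousOn (fun x => ∫ s in (0:ℝ)..x, F (ξ s) s) (Ici 0) := by
  intro x hx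
  have hx1 : 0 ≤ x + 1 := by linarith [hx.out]
  have h := intervalIntegral.continuousOn_primitive_interval'
    (intervalIntegrable_switched hD hF hx1) left_mem_uIcc
  rw [uIcc_of_le hx1, ← Ici_inter_Iic] at h
  exact (h x ⟨hx, by simp⟩).mono_of_mem_nhdsWithin
    (inter_mem_nhdsWithin _ (Iic_mem_nhds (lt_add_one x)))

lemma ContPt.hasDerivAt_primitive_switched (hD : (switchTimes ξ).Countable)
    (hF : ∀ σ, ContinuousOn (F σ) (Ici 0)) {t : ℝ} (h : ContPt ξ t) (ht : 0 < t) :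
    HasDerivAt (fun x => ∫ s in (0:ℝ)..x, F (ξ s) s) (F (ξ t) t) t :=
  intervalIntegral.integral_hasDerivAt_right (intervalIntegrable_switched hD hF ht.le)
    ⟨Ioi 0, Ioi_mem_nhds ht, aestronglyMeasurable_switched hD hF⟩
    (h.continuousAt_switched hF ht)

lemma integral_eq_sub_of_hasDerivAt_of_contPt {f f' : ℝ → ℝ} {x : ℝ}
    (hD : (switchTimes ξ).Countable) (hx : 0 ≤ x)
    (hf : ContinuousOn f (Icc 0 x)) (hf' : ∀ t ∈ Ioo 0 x, ContPt ξ t → HasDerivAt f (f' t) t)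
    (hint : IntervalIntegrable f' volume 0 x) :
    ∫ t in (0:ℝ)..x, f' t = f x - f 0 :=
  integral_eq_of_hasDerivAt_off_countable_of_le f f' hx hD hf
    (fun t ht => hf' t ht.1 (not_not.1 fun h => ht.2 ⟨ht.1.1.le, h⟩)) hint

end Switched

section SIRS

variable {N : ℝ} {a b c : Env → ℝ} {ξ : ℝ → Env} {S I : ℝ → ℝ}

lemma IsSIRSSolution.hasDerivAt (hsol : IsSIRSSolution N a b c ξ S I) {t : ℝ} (ht : 0 < t)
    (h : ContPt ξ t) :
    HasDerivAt S (-(a (ξ t) * S t * I t) + c (ξ t) * (N - S t - I t)) t ∧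
      HasDerivAt I (a (ξ t) * S t * I t - b (ξ t) * I t) t :=
  ⟨(hsol.2.2 t ht.le h).1.hasDerivAt (Ici_mem_nhds ht),
    (hsol.2.2 t ht.le h).2.hasDerivAt (Ici_mem_nhds ht)⟩

lemma IsSIRSSolution.infectives_eq (hsol : IsSIRSSolution N a b c ξ S I)
    (hD : (switchTimes ξ).Countable) {x : ℝ} (hx : 0 ≤ x) :
    I x = I 0 * Real.exp (∫ s in (0:ℝ)..x, (a (ξ s) * S s - b (ξ s))) := by
  set G := fun x => ∫ s in (0:ℝ)..x, (a (ξ s) * S s - b (ξ s))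
  have hF : ∀ σ, ContinuousOn (fun s => a σ * S s - b σ) (Ici 0) := fun σ =>
    (hsol.1.const_mul _).sub continuousOn_const
  have hconst := integral_eq_sub_of_hasDerivAt_of_contPt (f := fun t => I t * Real.exp (-G t))
    (f' := fun _ => 0) hD hx ?_ ?_ intervalIntegrable_const
  · have hG0 : G 0 = 0 := intervalIntegral.integral_same
    simp only [intervalIntegral.integral_zero, hG0, neg_zero, Real.exp_zero,
      mul_one] at hconst
    calc I x = I x * Real.exp (-G x) * Real.exp (G x) := by
          rw [mul_assoc, ← Real.exp_add, neg_add_cancel, Real.exp_zero, mul_one]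
      _ = I 0 * Real.exp (G x) := by rw [sub_eq_zero.1 hconst.symm]
  · exact (hsol.2.1.mono Icc_subset_Ici_self).mul (Real.continuous_exp.comp_continuousOn
      ((continuousOn_primitive_switched hD hF).mono Icc_subset_Ici_self).neg)
  · intro t ht h
    have hG := h.hasDerivAt_primitive_switched hD hF ht.1
    exact ((hsol.hasDerivAt ht.1 h).2.mul hG.neg.exp).congr_deriv (by ring)

lemma IsSIRSSolution.infectives_nonneg (hsol : IsSIRSSolution N a b c ξ S I)
    (hD : (switchTimes ξ).Countable) (hI0 : 0 ≤ I 0) {x : ℝ} (hx : 0 ≤ x) :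
    0 ≤ I x := by
  rw [hsol.infectives_eq hD hx]
  positivity

lemma IsSIRSSolution.add_le (hsol : IsSIRSSolution N a b c ξ S I)
    (hD : (switchTimes ξ).Countable) (hb : ∀ σ, 0 ≤ b σ) (hI0 : 0 ≤ I 0)
    (hsum : S 0 + I 0 ≤ N) {x : ℝ} (hx : 0 ≤ x) : S x + I x ≤ N := by
  set C := fun x => ∫ s in (0:ℝ)..x, c (ξ s)
  have hC : ContinuousOn C (Ici 0) :=
    continuousOn_primitive_switched (F := fun σ _ => c σ) hD fun _ => continuousOn_const
  have hF : ∀ σ, ContinuousOn (fun s => b σ * I s * Real.exp (C s)) (Ici 0) := fun σ =>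
    (hsol.2.1.const_mul _).mul (Real.continuous_exp.comp_continuousOn hC)
  have hdecr := integral_eq_sub_of_hasDerivAt_of_contPt
    (f := fun t => (S t + I t - N) * Real.exp (C t))
    (f' := fun t => -(b (ξ t) * I t * Real.exp (C t))) hD hx ?_ ?_
    (intervalIntegrable_switched hD hF hx).neg
  · have hC0 : C 0 = 0 := intervalIntegral.integral_same
    have hnonneg : 0 ≤ ∫ t in (0:ℝ)..x, b (ξ t) * I t * Real.exp (C t) :=
      intervalIntegral.integral_nonneg hx fun t ht =>
        mul_nonneg (mul_nonneg (hb _) (hsol.infectives_nonneg hD hI0 ht.1)) (Real.exp_pos _).le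
    rw [intervalIntegral.integral_neg, hC0, Real.exp_zero, mul_one] at hdecr
    have hQ : (S x + I x - N) * Real.exp (C x) ≤ 0 := by linarith
    exact sub_nonpos.1 (nonpos_of_mul_nonpos_left hQ (Real.exp_pos _))
  · exact (((hsol.1.add hsol.2.1).sub continuousOn_const).mul
      (Real.continuous_exp.comp_continuousOn hC)).mono Icc_subset_Ici_self
  · intro t ht h
    have hCt : HasDerivAt C (c (ξ t)) t :=
      h.hasDerivAt_primitive_switched (F := fun σ _ => c σ) hD (fun _ => continuousOn_const) ht.1
    obtain ⟨hS, hI⟩ := hsol.hasDerivAt ht.1 h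
    exact (((hS.add hI).sub_const N).mul hCt.exp).congr_deriv
      (by simp only [Pi.add_apply]; ring)

lemma IsSIRSSolution.log_infectives_le (hsol : IsSIRSSolution N a b c ξ S I)
    (hD : (switchTimes ξ).Countable)
    (ha : ∀ σ, 0 ≤ a σ) (hb : ∀ σ, 0 ≤ b σ) (hI0 : 0 < I 0) (hsum : S 0 + I 0 ≤ N)
    {t : ℝ} (ht : 0 ≤ t) :
    Real.log (I t) ≤ Real.log (I 0) + ∫ s in (0:ℝ)..t, (a (ξ s) * N - b (ξ s)) := by
  have hS : ∀ s ∈ Icc 0 t, S s ≤ N := fun s hs => by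
    linarith [hsol.add_le hD hb hI0.le hsum hs.1, hsol.infectives_nonneg hD hI0.le hs.1]
  rw [hsol.infectives_eq hD ht, Real.log_mul hI0.ne' (Real.exp_pos _).ne', Real.log_exp]
  refine add_le_add_right ?_ _
  refine intervalIntegral.integral_mono_on ht
    (intervalIntegrable_switched (F := fun σ s => a σ * S s - b σ) hD
      (fun σ => (hsol.1.const_mul _).sub continuousOn_const) ht)
    (intervalIntegrable_switched (F := fun σ _ => a σ * N - b σ) hD
      (fun _ => continuousOn_const) ht) fun s hs => ?_
  gcongr
  · exact ha _
  · exact hS s hs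

end SIRS

lemma limsup_div_le_of_le_add {f g : ℝ → ℝ} {C lam : ℝ} (hfg : ∀ᶠ t in atTop, f t ≤ C + g t)
    (hg : Tendsto (fun t => 1 / t * g t) atTop (𝓝 lam)) :
    limsup (fun t => ((f t / t : ℝ) : EReal)) atTop ≤ lam := by
  have hlim : Tendsto (fun t => C * t⁻¹ + 1 / t * g t) atTop (𝓝 lam) := by
    simpa using (tendsto_inv_atTop_zero.const_mul C).add hg
  refine (limsup_le_limsup ?_).trans_eq (EReal.tendsto_coe.2 hlim).limsup_eq
  filter_upwards [hfg, eventually_gt_atTop 0] with t hft ht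
  rw [EReal.coe_le_coe_iff, one_div, ← div_eq_mul_inv, ← div_eq_inv_mul, ← add_div]
  gcongr

theorem sirs_log_infectives_limsup_general
    (N : ℝ) (a b c : Env → ℝ)
    (ha : ∀ σ, 0 < a σ) (hb : ∀ σ, 0 < b σ)
    (ξ : ℝ → Env) (hξ : IsSwitchingSignal ξ)
    (lam : ℝ) (hmean : HasMeanGrowthRate N a b ξ lam)
    (S I : ℝ → ℝ) (hsol : IsSIRSSolution N a b c ξ S I)
    (hI0 : 0 < I 0) (hsum : S 0 + I 0 ≤ N) :
    Filter.limsup (fun t : ℝ => ((Real.log (I t) / t : ℝ) : EReal)) Filter.atTop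
      ≤ (lam : EReal) :=
  limsup_div_le_of_le_add (eventually_ge_atTop 0 |>.mono fun _ ht =>
    hsol.log_infectives_le hξ.countable_switchTimes (fun σ => (ha σ).le) (fun σ => (hb σ).le)
      hI0 hsum ht) hmean

/-- `limsup_{t→∞} (log I(t))/t ≤ λ`. -/
theorem sirs_log_infectives_limsup
    (N : ℝ) (hN : 0 < N) (a b c : Env → ℝ)
    (ha : ∀ σ, 0 < a σ) (hb : ∀ σ, 0 < b σ) (hc : ∀ σ, 0 < c σ)
    (ξ : ℝ → Env) (hξ : IsSwitchingSignal ξ)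
    (lam : ℝ) (hmean : HasMeanGrowthRate N a b ξ lam)
    (S I : ℝ → ℝ) (hsol : IsSIRSSolution N a b c ξ S I)
    (hS0 : 0 < S 0) (hI0 : 0 < I 0) (hsum : S 0 + I 0 ≤ N) :
    Filter.limsup (fun t : ℝ => ((Real.log (I t) / t : ℝ) : EReal)) Filter.atTop
      ≤ (lam : EReal) :=
  sirs_log_infectives_limsup_general N a b c ha hb ξ hξ lam hmean S I hsol hI0 hsum
end

section
/- Let ξ be any switching signal and let (S, I) be a solution of the switched SIRS system with S(0) ≥ 0, I(0) ≥ 0 and S(0) + I(0) ≤ N. If lim_{t→∞} I(t) = 0, then lim_{t→∞} S(t) = N. -/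
open Filter MeasureTheory

/-!
The removed compartment `R = N - S - I` obeys the scalar linear equation `R' = b I - c R`,
whose forcing term `b I` tends to `0` and whose damping `c` is bounded below by `min c > 0`.
Hence, away from the (locally finite) switching times, `|R|` decreases at a definite rate
whenever `|R| > ε`, so `R` enters the band `[-ε, ε]` and never leaves it; thus `R → 0` and
`S = N - R - I → N`.
-/

open Set Topology

theorem le_of_hasDerivAt_nonpos_off_finite {f f' : ℝ → ℝ} {B : Set ℝ} (hB : B.Finite)
    {x y : ℝ} (hxy : x ≤ y) (hf : ContinuousOn f (Icc x y))
    (hf' : ∀ t ∈ Ioo x y, t ∉ B → HasDerivAt f (f' t) t)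
    (hf'_nonpos : ∀ t ∈ Ioo x y, t ∉ B → f' t ≤ 0) :
    f y ≤ f x := by
  induction B, hB using Set.Finite.induction_on generalizing x y with
  | empty =>
    refine antitoneOn_of_hasDerivWithinAt_nonpos (f' := f') (convex_Icc x y) hf (fun t ht => ?_)
      (fun t ht => ?_) (left_mem_Icc.2 hxy) (right_mem_Icc.2 hxy) hxy
    · rw [interior_Icc] at ht ⊢
      exact (hf' t ht (notMem_empty t)).hasDerivWithinAt
    · rw [interior_Icc] at ht
      exact hf'_nonpos t ht (notMem_empty t)
  | @insert p B _ _ ih =>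
    by_cases hp : p ∈ Ioo x y
    · have hxp : f p ≤ f x :=
        ih hp.1.le (hf.mono (Icc_subset_Icc le_rfl hp.2.le))
          (fun t ht htB => hf' t ⟨ht.1, ht.2.trans hp.2⟩ (by simp [htB, ht.2.ne]))
          (fun t ht htB =>
            hf'_nonpos t ⟨ht.1, ht.2.trans hp.2⟩ (by simp [htB, ht.2.ne]))
      have hpy : f y ≤ f p :=
        ih hp.2.le (hf.mono (Icc_subset_Icc hp.1.le le_rfl))
          (fun t ht htB => hf' t ⟨hp.1.trans ht.1, ht.2⟩ (by simp [htB, ht.1.ne']))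
          (fun t ht htB =>
            hf'_nonpos t ⟨hp.1.trans ht.1, ht.2⟩ (by simp [htB, ht.1.ne']))
      exact hpy.trans hxp
    · have hne : ∀ t ∈ Ioo x y, t ≠ p := fun t ht h => hp (h ▸ ht)
      exact ih hxy hf (fun t ht htB => hf' t ht (by simp [htB, hne t ht]))
        (fun t ht htB => hf'_nonpos t ht (by simp [htB, hne t ht]))

section EventualBound

variable {f f' : ℝ → ℝ} {B : Set ℝ} {ε : ℝ}

theorem exists_le_of_hasDerivAt_le_neg {T κ : ℝ} (hB : ∀ y, (B ∩ Iic y).Finite) (hκ : 0 < κ)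
    (hf : ContinuousOn f (Ici T)) (hf' : ∀ t ≥ T, t ∉ B → ε < f t → HasDerivAt f (f' t) t)
    (hf'_le : ∀ t ≥ T, t ∉ B → ε < f t → f' t ≤ -κ) :
    ∃ t ≥ T, f t ≤ ε := by
  by_contra! hgt
  -- Adding `κ t` makes `f` nonincreasing, so it must fall by `f T - ε` in time `(f T - ε) / κ`.
  set y := T + (f T - ε) / κ
  have hTy : T ≤ y := le_add_of_nonneg_right (div_nonneg (sub_pos.2 (hgt T le_rfl)).le hκ.le)
  have hdrop : f y + κ * y ≤ f T + κ * T :=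
    le_of_hasDerivAt_nonpos_off_finite (f := fun t => f t + κ * t) (f' := fun t => f' t + κ)
      (hB y) hTy
      ((hf.mono Icc_subset_Ici_self).add (continuousOn_const.mul continuousOn_id))
      (fun t ht htB => (hf' t ht.1.le (fun h => htB ⟨h, ht.2.le⟩) (hgt t ht.1.le)).add
        ((hasDerivAt_id t).const_mul κ |>.congr_deriv (mul_one κ)))
      (fun t ht htB => by
        linarith [hf'_le t ht.1.le (fun h => htB ⟨h, ht.2.le⟩) (hgt t ht.1.le)])
  have hκy : κ * (y - T) = f T - ε := by
    simp only [y, add_sub_cancel_left]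
    field_simp
  linarith [hgt y hTy]

theorem le_of_le_of_hasDerivAt_nonpos {t₀ : ℝ} (hB : ∀ y, (B ∩ Iic y).Finite)
    (hf : ContinuousOn f (Ici t₀)) (hf' : ∀ t ≥ t₀, t ∉ B → ε < f t → HasDerivAt f (f' t) t)
    (hf'_nonpos : ∀ t ≥ t₀, t ∉ B → ε < f t → f' t ≤ 0) (h₀ : f t₀ ≤ ε) :
    ∀ y ≥ t₀, f y ≤ ε := by
  intro y hy
  by_contra! hfy
  -- `m` is the last time in `[t₀, y]` at which `f ≤ ε`; past it, `f` cannot increase.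
  set A := Icc t₀ y ∩ f ⁻¹' Iic ε
  have hA_bdd : BddAbove A := bddAbove_Icc.mono inter_subset_left
  have hmA : sSup A ∈ A :=
    ((hf.mono Icc_subset_Ici_self).preimage_isClosed_of_isClosed isClosed_Icc
      isClosed_Iic).csSup_mem ⟨t₀, ⟨le_rfl, hy⟩, h₀⟩ hA_bdd
  set m := sSup A
  have hmy : m < y := lt_of_le_of_ne hmA.1.2 fun h => hfy.not_ge (h ▸ hmA.2)
  have habove : ∀ t ∈ Ioo m y, ε < f t := fun t ht =>
    not_le.1 fun hft => (le_csSup hA_bdd ⟨⟨hmA.1.1.trans ht.1.le, ht.2.le⟩, hft⟩).not_gt ht.1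
  have hge : ∀ t ∈ Ioo m y, t₀ ≤ t := fun t ht => hmA.1.1.trans ht.1.le
  have hfm : f y ≤ f m :=
    le_of_hasDerivAt_nonpos_off_finite (hB y) hmy.le
      (hf.mono fun t ht => hmA.1.1.trans ht.1)
      (fun t ht htB => hf' t (hge t ht) (fun h => htB ⟨h, ht.2.le⟩) (habove t ht))
      (fun t ht htB => hf'_nonpos t (hge t ht) (fun h => htB ⟨h, ht.2.le⟩) (habove t ht))
  exact hfy.not_ge (hfm.trans hmA.2)

theorem eventually_le_of_hasDerivAt_le_neg {T κ : ℝ} (hB : ∀ y, (B ∩ Iic y).Finite)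
    (hκ : 0 < κ) (hf : ContinuousOn f (Ici T))
    (hf' : ∀ t ≥ T, t ∉ B → ε < f t → HasDerivAt f (f' t) t)
    (hf'_le : ∀ t ≥ T, t ∉ B → ε < f t → f' t ≤ -κ) :
    ∀ᶠ t in atTop, f t ≤ ε := by
  obtain ⟨t₀, hTt₀, h₀⟩ := exists_le_of_hasDerivAt_le_neg hB hκ hf hf' hf'_le
  exact eventually_atTop.2 ⟨t₀, le_of_le_of_hasDerivAt_nonpos hB
    (hf.mono (Ici_subset_Ici.2 hTt₀)) (fun t ht => hf' t (hTt₀.trans ht))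
    (fun t ht htB hft => (hf'_le t (hTt₀.trans ht) htB hft).trans (neg_nonpos.2 hκ.le)) h₀⟩

end EventualBound

section ForcedDecay

variable {u g k : ℝ → ℝ} {B : Set ℝ} {T κ : ℝ}

theorem eventually_le_of_hasDerivAt_sub_mul (hB : ∀ y, (B ∩ Iic y).Finite) (hκ : 0 < κ)
    (hu : ContinuousOn u (Ici T)) (hu' : ∀ t ≥ T, t ∉ B → HasDerivAt u (g t - k t * u t) t)
    (hk : ∀ t ≥ T, κ ≤ k t) (hg : Tendsto g atTop (𝓝 0)) {ε : ℝ} (hε : 0 < ε) :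
    ∀ᶠ t in atTop, u t ≤ ε := by
  obtain ⟨T', hT'⟩ :=
    eventually_atTop.1 (hg.eventually (gt_mem_nhds (by positivity : 0 < κ * ε / 2)))
  refine eventually_le_of_hasDerivAt_le_neg (T := max T T') (κ := κ * ε / 2) hB (by positivity)
    (hu.mono (Ici_subset_Ici.2 (le_max_left _ _)))
    (fun t ht htB _ => hu' t (le_of_max_le_left ht) htB) (fun t ht _ hut => ?_)
  have hkt := hk t (le_of_max_le_left ht)
  have hku : κ * ε ≤ k t * u t := mul_le_mul hkt hut.le hε.le (hκ.le.trans hkt)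
  linarith [hT' t (le_of_max_le_right ht)]

theorem tendsto_zero_of_hasDerivAt_sub_mul (hB : ∀ y, (B ∩ Iic y).Finite) (hκ : 0 < κ)
    (hu : ContinuousOn u (Ici T)) (hu' : ∀ t ≥ T, t ∉ B → HasDerivAt u (g t - k t * u t) t)
    (hk : ∀ t ≥ T, κ ≤ k t) (hg : Tendsto g atTop (𝓝 0)) :
    Tendsto u atTop (𝓝 0) := by
  refine tendsto_order.2 ⟨fun ε hε => ?_, fun ε hε => ?_⟩
  · have hneg := eventually_le_of_hasDerivAt_sub_mul (u := -u) (g := -g) hB hκ hu.neg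
      (fun t ht htB => (hu' t ht htB).neg.congr_deriv (by simp only [Pi.neg_apply]; ring))
      hk (by rw [← neg_zero]; exact hg.neg) (by linarith : 0 < -ε / 2)
    filter_upwards [hneg] with t ht
    simp only [Pi.neg_apply] at ht
    linarith
  · filter_upwards [eventually_le_of_hasDerivAt_sub_mul hB hκ hu hu' hk hg (half_pos hε)]
      with t ht
    linarith

end ForcedDecay

theorem IsSIRSSolution.hasDerivAt_removed {N : ℝ} {a b c : Env → ℝ} {ξ : ℝ → Env}
    {S I : ℝ → ℝ} (hsol : IsSIRSSolution N a b c ξ S I) {t : ℝ} (ht : 0 < t)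
    (hξt : ContPt ξ t) :
    HasDerivAt (fun s => N - S s - I s) (b (ξ t) * I t - c (ξ t) * (N - S t - I t)) t := by
  obtain ⟨hS, hI⟩ := hsol.2.2 t ht.le hξt
  exact (((hS.const_sub N).sub hI).hasDerivAt (Ici_mem_nhds ht)).congr_deriv (by ring)

theorem sirs_susceptibles_tend_to_N_general
    (N : ℝ) (a b c : Env → ℝ)
    (hc : ∀ σ, 0 < c σ)
    (ξ : ℝ → Env) (hξ : IsSwitchingSignal ξ)
    (S I : ℝ → ℝ) (hsol : IsSIRSSolution N a b c ξ S I)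
    (hItend : Filter.Tendsto I Filter.atTop (nhds 0)) :
    Filter.Tendsto S Filter.atTop (nhds N) := by
  have hbξ : IsBoundedUnder (· ≤ ·) atTop (fun t => ‖b (ξ t)‖) :=
    isBoundedUnder_of ⟨max ‖b true‖ ‖b false‖, fun t => by cases ξ t <;> simp⟩
  have hR : Tendsto (fun t => N - S t - I t) atTop (𝓝 0) :=
    tendsto_zero_of_hasDerivAt_sub_mul (B := {t | 0 ≤ t ∧ ¬ ContPt ξ t}) (T := 1)
      (k := fun t => c (ξ t)) (fun y => (hξ.2 y).subset fun t ht => ⟨ht.1.1, ht.2, ht.1.2⟩)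
      (lt_min (hc true) (hc false))
      ((continuousOn_const.sub hsol.1).sub hsol.2.1 |>.mono (Ici_subset_Ici.2 zero_le_one))
      (fun t ht htB => hsol.hasDerivAt_removed (by linarith)
        (not_not.1 fun h => htB ⟨by linarith, h⟩))
      (fun t _ => by cases ξ t <;> simp)
      (hItend.zero_mul_isBoundedUnder_le hbξ |>.congr fun t => mul_comm _ _)
  simpa using (tendsto_const_nhds (x := N)).sub (hR.add hItend)

/-- if `I(t) → 0` then `S(t) → N`. -/
theorem sirs_susceptibles_tend_to_N
    (N : ℝ) (hN : 0 < N) (a b c : Env → ℝ)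
    (ha : ∀ σ, 0 < a σ) (hb : ∀ σ, 0 < b σ) (hc : ∀ σ, 0 < c σ)
    (ξ : ℝ → Env) (hξ : IsSwitchingSignal ξ)
    (S I : ℝ → ℝ) (hsol : IsSIRSSolution N a b c ξ S I)
    (hS0 : 0 ≤ S 0) (hI0 : 0 ≤ I 0) (hsum : S 0 + I 0 ≤ N)
    (hItend : Filter.Tendsto I Filter.atTop (nhds 0)) :
    Filter.Tendsto S Filter.atTop (nhds N) :=
  sirs_susceptibles_tend_to_N_general N a b c hc ξ hξ S I hsol hItend
end

section
/- Suppose a(σ)·N ≤ b(σ) for every σ ∈ E (i.e. N ≤ b(σ)/a(σ) in both environmental states). Then for every switching signal ξ and every solution (S, I) of the switched SIRS system with S(0) > 0, I(0) > 0 and S(0) + I(0) ≤ N, one has lim_{t→∞} I(t) = 0 and lim_{t→∞} S(t) = N. -/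
/-!
Between switching times the system is an ordinary ODE, and the switching times are locally
finite, so monotonicity and comparison arguments go through with finitely many exceptional points
on each bounded interval. Positivity of `I` and the invariance of `S + I ≤ N` follow.
Then `(1/I)' = (b - aS)/I ≥ a(N - S)/I ≥ a` because `aN ≤ b`, so `I(t) ≤ 1/(1/I(0) + t·min a)`
tends to `0`. The recovered class `R = N - S - I ≥ 0` satisfies `R' = bI - cR`: once `bI` is
small, `R` decreases at a linear rate while it exceeds a given `ε > 0`, so `R → 0` and
`S = N - R - I → N`.
-/

open Filter MeasureTheory

open Set Real Topology

theorem le_of_hasDerivAt_nonneg_off_finite {f f' : ℝ → ℝ} {a b : ℝ} {s : Set ℝ}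
    (hs : (s ∩ Ioo a b).Finite) (hab : a ≤ b) (hf : ContinuousOn f (Icc a b))
    (hf' : ∀ x ∈ Ioo a b \ s, HasDerivAt f (f' x) x) (hf'₀ : ∀ x ∈ Ioo a b \ s, 0 ≤ f' x) :
    f a ≤ f b := by
  rw [← sdiff_inter_self_eq_sdiff] at hf' hf'₀
  generalize s ∩ Ioo a b = s at hs hf' hf'₀
  induction s, hs using Set.Finite.induction_on generalizing a b with
  | empty =>
    simp only [sdiff_empty] at hf' hf'₀
    have hmono : MonotoneOn f (Icc a b) :=
      monotoneOn_of_hasDerivWithinAt_nonneg (convex_Icc a b) hf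
        (fun x hx => (hf' x (interior_Icc (a := a) ▸ hx)).hasDerivWithinAt)
        (fun x hx => hf'₀ x (interior_Icc (a := a) ▸ hx))
    exact hmono (left_mem_Icc.2 hab) (right_mem_Icc.2 hab) hab
  | @insert e s _ _ ih =>
    have off_e : ∀ {x}, x ∈ Ioo a b \ s → x ≠ e → x ∈ Ioo a b \ insert e s :=
      fun hx hne => ⟨hx.1, by rintro (h | h); exacts [hne h, hx.2 h]⟩
    by_cases he : e ∈ Ioo a b
    · have left : ∀ x ∈ Ioo a e \ s, x ∈ Ioo a b \ insert e s := fun x hx =>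
        off_e ⟨⟨hx.1.1, hx.1.2.trans he.2⟩, hx.2⟩ hx.1.2.ne
      have right : ∀ x ∈ Ioo e b \ s, x ∈ Ioo a b \ insert e s := fun x hx =>
        off_e ⟨⟨he.1.trans hx.1.1, hx.1.2⟩, hx.2⟩ hx.1.1.ne'
      calc f a ≤ f e := ih he.1.le (hf.mono (Icc_subset_Icc_right he.2.le))
            (fun x hx => hf' x (left x hx)) (fun x hx => hf'₀ x (left x hx))
        _ ≤ f b := ih he.2.le (hf.mono (Icc_subset_Icc_left he.1.le))
            (fun x hx => hf' x (right x hx)) (fun x hx => hf'₀ x (right x hx))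
    · have off : ∀ x ∈ Ioo a b \ s, x ∈ Ioo a b \ insert e s := fun x hx =>
        off_e hx (fun h => he (h ▸ hx.1))
      exact ih hab hf (fun x hx => hf' x (off x hx)) (fun x hx => hf'₀ x (off x hx))

theorem le_of_hasDerivAt_nonpos_off_finite_s5 {f f' : ℝ → ℝ} {a b : ℝ} {s : Set ℝ}
    (hs : (s ∩ Ioo a b).Finite) (hab : a ≤ b) (hf : ContinuousOn f (Icc a b))
    (hf' : ∀ x ∈ Ioo a b \ s, HasDerivAt f (f' x) x) (hf'₀ : ∀ x ∈ Ioo a b \ s, f' x ≤ 0) :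
    f b ≤ f a :=
  neg_le_neg_iff.1 <| le_of_hasDerivAt_nonneg_off_finite (f := fun x => -f x) hs hab hf.neg
    (fun x hx => (hf' x hx).neg) (fun x hx => neg_nonneg.2 (hf'₀ x hx))

section LocallyFiniteExceptions

variable {f f' : ℝ → ℝ} {s : Set ℝ} {t₀ : ℝ}

theorem pos_of_hasDerivAt_ge_neg_mul (hs : ∀ a b, (s ∩ Ioo a b).Finite)
    (hf : ContinuousOn f (Ici t₀)) (hf' : ∀ t ∈ Ioi t₀ \ s, HasDerivAt f (f' t) t)
    (hK : ∀ T, ∃ K, ∀ t ∈ Ioo t₀ T \ s, 0 < f t → -K * f t ≤ f' t) (h₀ : 0 < f t₀) :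
    ∀ t, t₀ ≤ t → 0 < f t := by
  by_contra! hneg
  obtain ⟨t₁, ht₁, hft₁⟩ := hneg
  set Z := Icc t₀ t₁ ∩ f ⁻¹' Iic 0
  have hZ : BddBelow Z := ⟨t₀, fun t ht => ht.1.1⟩
  have hτ : sInf Z ∈ Z :=
    ((hf.mono Icc_subset_Ici_self).preimage_isClosed_of_isClosed isClosed_Icc
      isClosed_Iic).csInf_mem ⟨t₁, ⟨ht₁, le_rfl⟩, hft₁⟩ hZ
  set τ := sInf Z
  have hpos : ∀ t ∈ Ico t₀ τ, 0 < f t := fun t ht => by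
    by_contra! h
    exact (csInf_le hZ ⟨⟨ht.1, ht.2.le.trans hτ.1.2⟩, h⟩).not_gt ht.2
  obtain ⟨K, hK⟩ := hK τ
  -- the integrating factor `exp (t * K)` makes `f` nondecreasing up to its first zero `τ`
  have hmono : f t₀ * exp (t₀ * K) ≤ f τ * exp (τ * K) :=
    le_of_hasDerivAt_nonneg_off_finite (hs t₀ τ) hτ.1.1
      ((hf.mono Icc_subset_Ici_self).mul (continuous_mul_const K).rexp.continuousOn)
      (fun t ht => (hf' t ⟨ht.1.1, ht.2⟩).mul (hasDerivAt_mul_const K).exp)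
      (fun t ht => by
        have := hK t ht (hpos t ⟨ht.1.1.le, ht.1.2⟩)
        nlinarith [exp_pos (t * K)])
  have hfτ : f τ ≤ 0 := hτ.2
  nlinarith [exp_pos (t₀ * K), exp_pos (τ * K)]

theorem le_of_hasDerivAt_nonpos_above {c : ℝ} (hs : ∀ a b, (s ∩ Ioo a b).Finite)
    (hf : ContinuousOn f (Ici t₀)) (hf' : ∀ t ∈ Ioi t₀ \ s, HasDerivAt f (f' t) t)
    (hdec : ∀ t ∈ Ioi t₀ \ s, c < f t → f' t ≤ 0) (h₀ : f t₀ ≤ c) :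
    ∀ t, t₀ ≤ t → f t ≤ c := by
  by_contra! hgt
  obtain ⟨t₁, ht₁, hft₁⟩ := hgt
  set Z := Icc t₀ t₁ ∩ f ⁻¹' Iic c
  have hZ : BddAbove Z := ⟨t₁, fun t ht => ht.1.2⟩
  have hτ : sSup Z ∈ Z :=
    ((hf.mono Icc_subset_Ici_self).preimage_isClosed_of_isClosed isClosed_Icc
      isClosed_Iic).csSup_mem ⟨t₀, ⟨le_rfl, ht₁⟩, h₀⟩ hZ
  set τ := sSup Z
  have hgt : ∀ t ∈ Ioc τ t₁, c < f t := fun t ht => by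
    by_contra! h
    exact (le_csSup hZ ⟨⟨hτ.1.1.trans ht.1.le, ht.2⟩, h⟩).not_gt ht.1
  have hτt₁ : τ ≤ t₁ := hτ.1.2
  have hanti : f t₁ ≤ f τ :=
    le_of_hasDerivAt_nonpos_off_finite_s5 (hs τ t₁) hτt₁
      (hf.mono (Icc_subset_Ici_self.trans (Ici_subset_Ici.2 hτ.1.1)))
      (fun t ht => hf' t ⟨hτ.1.1.trans_lt ht.1.1, ht.2⟩)
      (fun t ht => hdec t ⟨hτ.1.1.trans_lt ht.1.1, ht.2⟩ (hgt t ⟨ht.1.1, ht.1.2.le⟩))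
  linarith [show f τ ≤ c from hτ.2]

theorem eventually_le_of_hasDerivAt_le_neg_above {c δ : ℝ}
    (hs : ∀ a b, (s ∩ Ioo a b).Finite) (hf : ContinuousOn f (Ici t₀))
    (hf' : ∀ t ∈ Ioi t₀ \ s, HasDerivAt f (f' t) t) (hbdd : BddBelow (f '' Ici t₀)) (hδ : 0 < δ)
    (hdec : ∀ t ∈ Ioi t₀ \ s, c < f t → f' t ≤ -δ) :
    ∀ᶠ t in atTop, f t ≤ c := by
  obtain ⟨m, hm⟩ := hbdd
  obtain ⟨t₁, ht₁, hft₁⟩ : ∃ t₁, t₀ ≤ t₁ ∧ f t₁ ≤ c := by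
    by_contra! hgt
    -- otherwise `f t + δ * t` would be nonincreasing forever, while `f` is bounded below
    set T := t₀ + (f t₀ - m + 1) / δ
    have hT : t₀ ≤ T := by
      have hm₀ : m ≤ f t₀ := hm (mem_image_of_mem f self_mem_Ici)
      have : 0 ≤ (f t₀ - m + 1) / δ := div_nonneg (by linarith) hδ.le
      linarith
    have hanti : f T + T * δ ≤ f t₀ + t₀ * δ :=
      le_of_hasDerivAt_nonpos_off_finite_s5 (hs t₀ T) hT
        ((hf.mono Icc_subset_Ici_self).add (continuous_mul_const δ).continuousOn)
        (fun t ht => (hf' t ⟨ht.1.1, ht.2⟩).add (hasDerivAt_mul_const δ))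
        (fun t ht => by linarith [hdec t ⟨ht.1.1, ht.2⟩ (hgt t ht.1.1.le)])
    have hδT : T * δ = t₀ * δ + (f t₀ - m + 1) := by
      simp only [T]; field_simp
    linarith [hm ⟨T, hT, rfl⟩]
  refine eventually_atTop.2 ⟨t₁, le_of_hasDerivAt_nonpos_above hs
    (hf.mono (Ici_subset_Ici.2 ht₁)) (fun t ht => hf' t ⟨ht₁.trans_lt ht.1, ht.2⟩)
    (fun t ht hct => ?_) hft₁⟩
  exact (hdec t ⟨ht₁.trans_lt ht.1, ht.2⟩ hct).trans (neg_nonpos.2 hδ.le)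

end LocallyFiniteExceptions

theorem exists_abs_mul_le_of_continuousOn {ι : Type*} [Finite ι] [Nonempty ι] (g : ι → ℝ)
    {F : ℝ → ℝ} {a b : ℝ} (hF : ContinuousOn F (Icc a b)) :
    ∃ K, ∀ σ, ∀ t ∈ Icc a b, |g σ * F t| ≤ K := by
  obtain ⟨M, hM⟩ := isCompact_Icc.exists_bound_of_continuousOn hF
  obtain ⟨σ₀, hσ₀⟩ := Finite.exists_max fun σ => |g σ|
  exact ⟨|g σ₀| * M, fun σ t ht => abs_mul (g σ) (F t) ▸
    mul_le_mul (hσ₀ σ) (hM t ht) (abs_nonneg _) (abs_nonneg _)⟩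

def switchingTimes (ξ : ℝ → Env) : Set ℝ := {t | 0 ≤ t ∧ ¬ ContPt ξ t}

theorem IsSwitchingSignal.finite_switchingTimes_inter_Ioo {ξ : ℝ → Env}
    (hξ : IsSwitchingSignal ξ) (a b : ℝ) : (switchingTimes ξ ∩ Ioo a b).Finite :=
  (hξ.2 b).subset fun _ ⟨⟨h0, hξt⟩, ht⟩ => ⟨h0, ht.2.le, hξt⟩

theorem contPt_of_notMem_switchingTimes {ξ : ℝ → Env} {t : ℝ} (ht : 0 ≤ t)
    (hξt : t ∉ switchingTimes ξ) : ContPt ξ t :=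
  of_not_not fun h => hξt ⟨ht, h⟩

namespace IsSIRSSolution

variable {N : ℝ} {a b c : Env → ℝ} {ξ : ℝ → Env} {S I : ℝ → ℝ}

theorem hasDerivAt_S (h : IsSIRSSolution N a b c ξ S I) {t : ℝ} (ht : 0 < t)
    (hξt : t ∉ switchingTimes ξ) :
    HasDerivAt S (-(a (ξ t) * S t * I t) + c (ξ t) * (N - S t - I t)) t :=
  (h.2.2 t ht.le (contPt_of_notMem_switchingTimes ht.le hξt)).1.hasDerivAt (Ici_mem_nhds ht)

theorem hasDerivAt_I (h : IsSIRSSolution N a b c ξ S I) {t : ℝ} (ht : 0 < t)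
    (hξt : t ∉ switchingTimes ξ) :
    HasDerivAt I (a (ξ t) * S t * I t - b (ξ t) * I t) t :=
  (h.2.2 t ht.le (contPt_of_notMem_switchingTimes ht.le hξt)).2.hasDerivAt (Ici_mem_nhds ht)

theorem hasDerivAt_S_add_I (h : IsSIRSSolution N a b c ξ S I) {t : ℝ} (ht : 0 < t)
    (hξt : t ∉ switchingTimes ξ) :
    HasDerivAt (fun u => S u + I u) (c (ξ t) * (N - (S t + I t)) - b (ξ t) * I t) t :=
  ((h.hasDerivAt_S ht hξt).add (h.hasDerivAt_I ht hξt)).congr_deriv (by ring)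

theorem hasDerivAt_N_sub_S_sub_I (h : IsSIRSSolution N a b c ξ S I) {t : ℝ} (ht : 0 < t)
    (hξt : t ∉ switchingTimes ξ) :
    HasDerivAt (fun u => N - S u - I u) (b (ξ t) * I t - c (ξ t) * (N - S t - I t)) t :=
  (((hasDerivAt_const t N).sub (h.hasDerivAt_S ht hξt)).sub (h.hasDerivAt_I ht hξt)).congr_deriv
    (by ring)

theorem I_pos (h : IsSIRSSolution N a b c ξ S I) (hξ : IsSwitchingSignal ξ) (hI₀ : 0 < I 0) :
    ∀ t, 0 ≤ t → 0 < I t := by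
  refine pos_of_hasDerivAt_ge_neg_mul hξ.finite_switchingTimes_inter_Ioo h.2.1
    (fun t ht => h.hasDerivAt_I ht.1 ht.2) (fun T => ?_) hI₀
  obtain ⟨K, hK⟩ :=
    exists_abs_mul_le_of_continuousOn a (h.1.mono (Icc_subset_Ici_self : Icc 0 T ⊆ _))
  obtain ⟨σ₀, hσ₀⟩ := Finite.exists_max b
  refine ⟨K + b σ₀, fun t ht hIt => ?_⟩
  have haS := neg_le_of_abs_le (hK (ξ t) t ⟨ht.1.1.le, ht.1.2.le⟩)
  nlinarith [hσ₀ (ξ t)]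

theorem S_add_I_le (h : IsSIRSSolution N a b c ξ S I) (hξ : IsSwitchingSignal ξ)
    (hb : ∀ σ, 0 ≤ b σ) (hc : ∀ σ, 0 ≤ c σ) (hI : ∀ t, 0 ≤ t → 0 ≤ I t)
    (hSI₀ : S 0 + I 0 ≤ N) : ∀ t, 0 ≤ t → S t + I t ≤ N :=
  le_of_hasDerivAt_nonpos_above hξ.finite_switchingTimes_inter_Ioo (h.1.add h.2.1)
    (fun t ht => h.hasDerivAt_S_add_I ht.1 ht.2)
    (fun t ht hlt => by
      nlinarith [mul_nonneg (hb (ξ t)) (hI t ht.1.le),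
        mul_nonneg (hc (ξ t)) (sub_nonneg.2 hlt.le)])
    hSI₀

theorem I_le_inv (h : IsSIRSSolution N a b c ξ S I) (hξ : IsSwitchingSignal ξ) {α : ℝ}
    (hα₀ : 0 ≤ α) (hα : ∀ σ, α ≤ a σ) (hsub : ∀ σ, a σ * N ≤ b σ) (hI : ∀ t, 0 ≤ t → 0 < I t)
    (hSI : ∀ t, 0 ≤ t → S t + I t ≤ N) {t : ℝ} (ht : 0 ≤ t) :
    I t ≤ ((I 0)⁻¹ + t * α)⁻¹ := by
  have hgrowth : (I 0)⁻¹ - 0 * α ≤ (I t)⁻¹ - t * α :=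
    le_of_hasDerivAt_nonneg_off_finite (hξ.finite_switchingTimes_inter_Ioo 0 t) ht
      (((h.2.1.mono Icc_subset_Ici_self).inv₀ fun u hu => (hI u hu.1).ne').sub
        (continuous_mul_const α).continuousOn)
      (fun u hu => ((h.hasDerivAt_I hu.1.1 hu.2).inv (hI u hu.1.1.le).ne').sub
        (hasDerivAt_mul_const α))
      (fun u hu => by
        have hIu := hI u hu.1.1.le
        rw [sub_nonneg, neg_div, le_neg, div_le_iff₀ (by positivity)]
        have ha : 0 ≤ a (ξ u) := hα₀.trans (hα (ξ u))
        nlinarith [mul_nonneg hIu.le (sub_nonneg.2 (hsub (ξ u))),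
          mul_nonneg (mul_nonneg hIu.le ha) (sub_nonneg.2 (hSI u hu.1.1.le)),
          mul_nonneg (mul_nonneg hIu.le hIu.le) (sub_nonneg.2 (hα (ξ u)))])
  rw [zero_mul, sub_zero] at hgrowth
  rw [← inv_inv (I t)]
  exact inv_anti₀ (by have := hI 0 le_rfl; positivity) (by linarith)

theorem tendsto_I_zero (h : IsSIRSSolution N a b c ξ S I) (hξ : IsSwitchingSignal ξ)
    (ha : ∀ σ, 0 < a σ) (hsub : ∀ σ, a σ * N ≤ b σ) (hI : ∀ t, 0 ≤ t → 0 < I t)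
    (hSI : ∀ t, 0 ≤ t → S t + I t ≤ N) : Tendsto I atTop (𝓝 0) := by
  obtain ⟨σ₀, hσ₀⟩ := Finite.exists_min a
  have hbound : Tendsto (fun t => ((I 0)⁻¹ + t * a σ₀)⁻¹) atTop (𝓝 0) :=
    (tendsto_atTop_add_const_left _ _ (tendsto_id.atTop_mul_const (ha σ₀))).inv_tendsto_atTop
  exact tendsto_of_tendsto_of_tendsto_of_le_of_le' tendsto_const_nhds hbound
    (eventually_atTop.2 ⟨0, fun t ht => (hI t ht).le⟩)
    (eventually_atTop.2 ⟨0, fun t ht => h.I_le_inv hξ (ha σ₀).le hσ₀ hsub hI hSI ht⟩)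

theorem tendsto_N_sub_S_sub_I_zero (h : IsSIRSSolution N a b c ξ S I)
    (hξ : IsSwitchingSignal ξ) (hc : ∀ σ, 0 < c σ) (hI : ∀ t, 0 ≤ t → 0 ≤ I t)
    (hSI : ∀ t, 0 ≤ t → S t + I t ≤ N)
    (hI_lim : Tendsto I atTop (𝓝 0)) : Tendsto (fun t => N - S t - I t) atTop (𝓝 0) := by
  have hR : ∀ t, 0 ≤ t → 0 ≤ N - S t - I t := fun t ht => by linarith [hSI t ht]
  obtain ⟨σ₀, hσ₀⟩ := Finite.exists_min c
  obtain ⟨σ₁, hσ₁⟩ := Finite.exists_max fun σ => |b σ|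
  have hR_le : ∀ ε > 0, ∀ᶠ t in atTop, N - S t - I t ≤ ε := by
    intro ε hε
    have hbI : Tendsto (fun t => |b σ₁| * I t) atTop (𝓝 0) := by
      simpa using hI_lim.const_mul |b σ₁|
    obtain ⟨T, hT⟩ := eventually_atTop.1
      (hbI.eventually (gt_mem_nhds (by have := hc σ₀; positivity : 0 < c σ₀ * ε / 2)))
    have hT₀ : 0 ≤ max T 0 := le_max_right T 0
    refine eventually_le_of_hasDerivAt_le_neg_above (t₀ := max T 0) (δ := c σ₀ * ε / 2)
      hξ.finite_switchingTimes_inter_Ioo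
      (((continuousOn_const.sub h.1).sub h.2.1).mono (Ici_subset_Ici.2 hT₀))
      (fun t ht => h.hasDerivAt_N_sub_S_sub_I (hT₀.trans_lt ht.1) ht.2)
      ⟨0, by rintro _ ⟨t, ht, rfl⟩; exact hR t (hT₀.trans ht)⟩
      (by have := hc σ₀; positivity) (fun t ht hεR => ?_)
    have hbI_t : b (ξ t) * I t ≤ |b σ₁| * I t :=
      mul_le_mul_of_nonneg_right ((le_abs_self _).trans (hσ₁ _)) (hI t (hT₀.trans ht.1.le))
    have hcR : c σ₀ * ε ≤ c (ξ t) * (N - S t - I t) :=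
      mul_le_mul (hσ₀ _) hεR.le hε.le (hc _).le
    linarith [hT t ((le_max_left T 0).trans ht.1.le)]
  exact tendsto_order.2
    ⟨fun x hx => eventually_atTop.2 ⟨0, fun t ht => hx.trans_le (hR t ht)⟩,
      fun x hx => (hR_le (x / 2) (by positivity)).mono fun t ht => by linarith⟩

end IsSIRSSolution

theorem sirs_extinction_when_subcritical_in_both_states_general
    (N : ℝ) (a b c : Env → ℝ)
    (ha : ∀ σ, 0 < a σ) (hb : ∀ σ, 0 < b σ) (hc : ∀ σ, 0 < c σ)
    (hsub : ∀ σ, a σ * N ≤ b σ) :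
    ∀ (ξ : ℝ → Env), IsSwitchingSignal ξ →
    ∀ (S I : ℝ → ℝ), IsSIRSSolution N a b c ξ S I →
    0 < S 0 → 0 < I 0 → S 0 + I 0 ≤ N →
    Filter.Tendsto I Filter.atTop (nhds 0) ∧
    Filter.Tendsto S Filter.atTop (nhds N) := by
  intro ξ hξ S I hsol _ hI₀ hSI₀
  have hI := hsol.I_pos hξ hI₀
  have hI' : ∀ t, 0 ≤ t → 0 ≤ I t := fun t ht => (hI t ht).le
  have hSI := hsol.S_add_I_le hξ (fun σ => (hb σ).le) (fun σ => (hc σ).le) hI' hSI₀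
  have hI_lim := hsol.tendsto_I_zero hξ ha hsub hI hSI
  have hR_lim := hsol.tendsto_N_sub_S_sub_I_zero hξ hc hI' hSI hI_lim
  refine ⟨hI_lim, ?_⟩
  have hS_lim := ((tendsto_const_nhds (x := N)).sub hR_lim).sub hI_lim
  simp only [sub_zero] at hS_lim
  exact hS_lim.congr fun t => by ring

/-- if `a(σ)·N ≤ b(σ)` in both environmental states, then for
every switching signal and every positive solution the disease dies out. -/
theorem sirs_extinction_when_subcritical_in_both_states
    (N : ℝ) (hN : 0 < N) (a b c : Env → ℝ)
    (ha : ∀ σ, 0 < a σ) (hb : ∀ σ, 0 < b σ) (hc : ∀ σ, 0 < c σ)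
    (hsub : ∀ σ, a σ * N ≤ b σ) :
    ∀ (ξ : ℝ → Env), IsSwitchingSignal ξ →
    ∀ (S I : ℝ → ℝ), IsSIRSSolution N a b c ξ S I →
    0 < S 0 → 0 < I 0 → S 0 + I 0 ≤ N →
    Filter.Tendsto I Filter.atTop (nhds 0) ∧
    Filter.Tendsto S Filter.atTop (nhds N) :=
  sirs_extinction_when_subcritical_in_both_states_general N a b c ha hb hc hsub
end
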